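/- arXiv:1805.06575 — 5 statements merged into one kernel-verified Lean document; each statement's English description precedes it below -/
import Mathlib

section
/- For every integer n ≥ 0: if n is even then D2(n) > 0, and if n is odd then D2(n) < 0. -/
private lemma coeff_fac (k m : ℕ) :
    PowerSeries.coeff (R := ℤ) m ((1 - PowerSeries.X ^ (2 * k + 1)) ^ 2) =
      if m = 0 then 1 else if m = 2 * k + 1 then -2
        else if m = 2 * (2 * k + 1) then 1 else 0 := by
  have h : ((1 - PowerSeries.X ^ (2 * k + 1)) ^ 2 : PowerSeries ℤ)
      = 1 - PowerSeries.X ^ (2 * k + 1) - PowerSeries.X ^ (2 * k + 1)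
        + PowerSeries.X ^ (2 * k + 1) * PowerSeries.X ^ (2 * k + 1) := by ring
  rw [h, ← pow_add]
  simp only [map_add, map_sub, PowerSeries.coeff_one, PowerSeries.coeff_X_pow]
  split_ifs <;> omega

private lemma fac_nonneg (k m : ℕ) :
    0 ≤ (-1 : ℤ) ^ m * PowerSeries.coeff (R := ℤ) m ((1 - PowerSeries.X ^ (2 * k + 1)) ^ 2) := by
  rw [coeff_fac]
  split_ifs with h1 h2 h3
  · subst h1; norm_num
  · subst h2; rw [Odd.neg_one_pow ⟨k, by omega⟩]; norm_num
  · subst h3; rw [Even.neg_one_pow ⟨2 * k + 1, by omega⟩]; norm_num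
  · simp

private lemma fac_pos (k m : ℕ) (h : m = 0 ∨ m = 2 * k + 1 ∨ m = 2 * (2 * k + 1)) :
    0 < (-1 : ℤ) ^ m * PowerSeries.coeff (R := ℤ) m ((1 - PowerSeries.X ^ (2 * k + 1)) ^ 2) := by
  rw [coeff_fac]
  rcases h with h | h | h <;> subst h
  · norm_num
  · rw [if_neg (by omega), if_pos rfl, Odd.neg_one_pow ⟨k, by omega⟩]; norm_num
  · rw [if_neg (by omega), if_neg (by omega), if_pos rfl,
      Even.neg_one_pow ⟨2 * k + 1, by omega⟩]; norm_num

private lemma signed_prod (n : ℕ) (l : ℕ →₀ ℕ)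
    (hl : ∑ k ∈ Finset.range (n + 1), l k = n) :
    (-1 : ℤ) ^ n * ∏ k ∈ Finset.range (n + 1),
        PowerSeries.coeff (R := ℤ) (l k) ((1 - PowerSeries.X ^ (2 * k + 1)) ^ 2)
      = ∏ k ∈ Finset.range (n + 1),
        ((-1 : ℤ) ^ (l k) *
          PowerSeries.coeff (R := ℤ) (l k) ((1 - PowerSeries.X ^ (2 * k + 1)) ^ 2)) := by
  rw [Finset.prod_mul_distrib, Finset.prod_pow_eq_pow_sum, hl]

private lemma single_mem (n j : ℕ) (hj : j < n + 1) :
    Finsupp.single j n ∈ Finset.finsuppAntidiag (Finset.range (n + 1)) n := by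
  rw [Finset.mem_finsuppAntidiag]
  constructor
  · simp only [Finsupp.single_apply, Finset.sum_ite_eq, Finset.mem_range]
    rw [if_pos hj]
  · exact Finsupp.support_single_subset.trans (by simpa using hj)

private lemma exists_wit (n : ℕ) :
    ∃ l ∈ Finset.finsuppAntidiag (Finset.range (n + 1)) n,
      ∀ k, l k = 0 ∨ l k = 2 * k + 1 ∨ l k = 2 * (2 * k + 1) := by
  obtain h | h | h | h :
      n = 0 ∨ (n % 4 = 0 ∧ n ≠ 0) ∨ n % 4 = 2 ∨ n % 2 = 1 := by omega
  · subst h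
    exact ⟨0, by simp [Finset.mem_finsuppAntidiag], fun k => Or.inl rfl⟩
  · -- n ≡ 0 mod 4, n ≥ 4 : use (n-1) at index (n-2)/2 and 1 at index 0
    refine ⟨Finsupp.single ((n - 2) / 2) (n - 1) + Finsupp.single 0 1, ?_, ?_⟩
    · rw [Finset.mem_finsuppAntidiag]
      constructor
      · simp only [Finsupp.coe_add, Pi.add_apply, Finsupp.add_apply, Finsupp.single_apply, Finset.sum_add_distrib,
          Finset.sum_ite_eq, Finset.mem_range]
        rw [if_pos (by omega), if_pos (by omega)]
        omega
      · refine Finsupp.support_add.trans ?_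
        apply Finset.union_subset <;>
          exact Finsupp.support_single_subset.trans
            (by simp only [Finset.singleton_subset_iff, Finset.mem_range]; omega)
    · intro k
      simp only [Finsupp.add_apply, Finsupp.single_apply]
      by_cases h1 : (n - 2) / 2 = k
      · rw [if_pos h1, if_neg (by omega)]; omega
      · rw [if_neg h1]
        by_cases h2 : 0 = k
        · rw [if_pos h2]; omega
        · rw [if_neg h2]; omega
  · -- n ≡ 2 mod 4 : use n = 2*(2j+1) at index j = (n-2)/4
    refine ⟨Finsupp.single ((n - 2) / 4) n, single_mem n _ (by omega), fun k => ?_⟩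
    rw [Finsupp.single_apply]
    by_cases h1 : (n - 2) / 4 = k
    · rw [if_pos h1]; omega
    · rw [if_neg h1]; omega
  · -- n odd : use n = 2j+1 at index j = (n-1)/2
    refine ⟨Finsupp.single ((n - 1) / 2) n, single_mem n _ (by omega), fun k => ?_⟩
    rw [Finsupp.single_apply]
    by_cases h1 : (n - 1) / 2 = k
    · rw [if_pos h1]; omega
    · rw [if_neg h1]; omega

/-- Let `D2 : ℕ → ℤ` be defined by
`∑_{n≥0} D2(n) qⁿ = ∏_{k≥1} (1 − q^{2k−1})²` (stated coefficientwise, with the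
infinite product truncated harmlessly: factors with exponent `> n` do not affect
the coefficient of `qⁿ`).  Then `D2(n) > 0` for even `n` and `D2(n) < 0` for odd `n`. -/
theorem bicrank_mod_two_sign
    (D2 : ℕ → ℤ)
    (hD2 : ∀ n : ℕ,
      PowerSeries.coeff (R := ℤ) n (PowerSeries.mk D2) =
        PowerSeries.coeff (R := ℤ) n
          (∏ k ∈ Finset.range (n + 1), (1 - PowerSeries.X ^ (2 * k + 1)) ^ 2)) :
    ∀ n : ℕ, (Even n → 0 < D2 n) ∧ (Odd n → D2 n < 0) := by
  intro n
  have key : 0 < (-1 : ℤ) ^ n * D2 n := by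
    have h := hD2 n
    rw [PowerSeries.coeff_mk] at h
    rw [h, PowerSeries.coeff_prod, Finset.mul_sum]
    apply Finset.sum_pos'
    · intro l hl
      rw [Finset.mem_finsuppAntidiag] at hl
      rw [signed_prod n l hl.1]
      exact Finset.prod_nonneg fun k _ => fac_nonneg k (l k)
    · obtain ⟨l, hl, hval⟩ := exists_wit n
      refine ⟨l, hl, ?_⟩
      have hm := hl
      rw [Finset.mem_finsuppAntidiag] at hm
      rw [signed_prod n l hm.1]
      exact Finset.prod_pos fun k _ => fac_pos k (l k) (hval k)
  constructor
  · intro he; rwa [Even.neg_one_pow he, one_mul] at key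
  · intro ho; rw [Odd.neg_one_pow ho] at key; linarith
end

section
/- Let m and k be positive integers and d = gcd(m,k). If y ∈ ℂ satisfies Im(y) ≥ d²/(2m), then |F(e(y))| ≤ exp( e^{−π d²/m} / (1 − e^{−π d²/m})² ) and |1/F(e(y))| ≤ exp( e^{−π d²/m} / (1 − e^{−π d²/m})² ). -/
/-- `F(q) = ∏_{k=1}^∞ (1 − q^k)⁻¹`, the generating function of partitions. -/
noncomputable def F (q : ℂ) : ℂ := (∏' k : ℕ, (1 - q ^ (k + 1)))⁻¹

/-- `e(x) = exp(2πix)`. -/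
noncomputable def e (x : ℂ) : ℂ := Complex.exp (2 * (Real.pi : ℂ) * Complex.I * x)

lemma aux_prod_bound (q : ℂ) (R : ℝ) (hR0 : 0 ≤ R) (hR1 : R < 1)
    (hq : ‖q‖ ≤ R) :
    ‖(∏' k : ℕ, (1 - q ^ (k + 1)))‖ ≤ Real.exp (R / (1 - R) ^ 2) ∧
      ‖(∏' k : ℕ, (1 - q ^ (k + 1)))⁻¹‖ ≤ Real.exp (R / (1 - R) ^ 2) := by
  have hr0 : 0 ≤ ‖q‖ := norm_nonneg q
  have hr1 : ‖q‖ < 1 := lt_of_le_of_lt hq hR1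
  have h1R : 0 < 1 - R := by linarith
  have hnq : ‖q‖ = ‖q‖ := rfl
  have hzk : ∀ n : ℕ, ‖q‖ ^ (n + 1) ≤ R := by
    intro n
    rw [hnq]
    calc ‖q‖ ^ (n + 1) ≤ R ^ (n + 1) := pow_le_pow_left₀ hr0 hq _
      _ ≤ R ^ 1 := pow_le_pow_of_le_one hR0 hR1.le (by omega)
      _ = R := pow_one R
  have hzlt : ∀ n : ℕ, ‖q‖ ^ (n + 1) < 1 := fun n => lt_of_le_of_lt (hzk n) hR1
  have hne : ∀ n : ℕ, 1 - q ^ (n + 1) ≠ 0 := by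
    intro n h
    have h1 : (1 : ℂ) = q ^ (n + 1) := by linear_combination h
    have h2 : (1 : ℝ) = ‖q‖ ^ (n + 1) := by
      calc (1 : ℝ) = ‖(1 : ℂ)‖ := by simp
        _ = ‖q ^ (n + 1)‖ := by rw [← h1]
        _ = ‖q‖ ^ (n + 1) := norm_pow q _
    linarith [hzlt n]
  have hlog : ∀ n : ℕ, ‖Complex.log (1 - q ^ (n + 1))‖ ≤ ‖q‖ ^ (n + 1) / (1 - R) := by
    intro n
    have hlt : ‖-(q ^ (n + 1))‖ < 1 := by rw [norm_neg, norm_pow]; exact hzlt n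
    have h := Complex.norm_log_one_add_le hlt
    rw [norm_neg, norm_pow] at h
    rw [sub_eq_add_neg]
    set t := ‖q‖ ^ (n + 1) with htdef
    have ht0 : 0 ≤ t := pow_nonneg (norm_nonneg q) _
    have htR : t ≤ R := hzk n
    have h1t : 0 < 1 - t := by linarith [hzlt n]
    have hinv : (1 - t) * (1 - t)⁻¹ = 1 := mul_inv_cancel₀ h1t.ne'
    have hinvpos : 0 < (1 - t)⁻¹ := inv_pos.mpr h1t
    calc ‖Complex.log (1 + -(q ^ (n + 1)))‖ ≤ t ^ 2 * (1 - t)⁻¹ / 2 + t := h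
      _ ≤ t / (1 - R) := by
          rw [le_div_iff₀ h1R]
          have key : t ^ 2 * (1 - t)⁻¹ * (1 - R) ≤ t * R := by
            have h5 : t ^ 2 * (1 - t)⁻¹ * (1 - R) ≤ t ^ 2 * (1 - t)⁻¹ * (1 - t) := by
              apply mul_le_mul_of_nonneg_left (by linarith) (by positivity)
            have h6 : t ^ 2 * (1 - t)⁻¹ * (1 - t) = t ^ 2 := by
              field_simp
            nlinarith [pow_le_pow_left₀ ht0 htR 2, sq_nonneg t]
          nlinarith [key, mul_pos hinvpos h1t]
  have hgeo : Summable (fun n : ℕ => ‖q‖ ^ (n + 1) / (1 - R)) := by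
    apply Summable.div_const
    exact ((summable_geometric_of_lt_one (norm_nonneg q) hr1).mul_left ‖q‖).congr
      (fun n => by rw [← pow_succ'])
  have hsummorm : Summable (fun n : ℕ => ‖Complex.log (1 - q ^ (n + 1))‖) :=
    Summable.of_nonneg_of_le (fun n => norm_nonneg _) hlog hgeo
  have hsumlog : Summable (fun n : ℕ => Complex.log (1 - q ^ (n + 1))) :=
    hsummorm.of_norm
  set S := ∑' n : ℕ, Complex.log (1 - q ^ (n + 1)) with hS
  have hprod : HasProd (fun n : ℕ => 1 - q ^ (n + 1)) (Complex.exp S) := by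
    have h0 := hsumlog.hasSum.cexp
    rwa [show (Complex.exp ∘ fun n : ℕ => Complex.log (1 - q ^ (n + 1)))
        = fun n : ℕ => 1 - q ^ (n + 1) from funext fun n => Complex.exp_log (hne n)] at h0
  have htprod : (∏' n : ℕ, (1 - q ^ (n + 1))) = Complex.exp S := hprod.tprod_eq
  have hSbound : ‖S‖ ≤ R / (1 - R) ^ 2 := by
    have step1 : ‖S‖ ≤ ∑' n : ℕ, ‖Complex.log (1 - q ^ (n + 1))‖ :=
      norm_tsum_le_tsum_norm hsummorm
    have step2 : ∑' n : ℕ, ‖Complex.log (1 - q ^ (n + 1))‖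
        ≤ ∑' n : ℕ, ‖q‖ ^ (n + 1) / (1 - R) := Summable.tsum_le_tsum hlog hsummorm hgeo
    have step3 : ∑' n : ℕ, ‖q‖ ^ (n + 1) / (1 - R)
        = (‖q‖ * (1 - ‖q‖)⁻¹) / (1 - R) := by
      rw [tsum_div_const]
      congr 1
      rw [← tsum_geometric_of_lt_one (norm_nonneg q) hr1, ← tsum_mul_left]
      exact tsum_congr fun n => by rw [← pow_succ']
    have step4 : (‖q‖ * (1 - ‖q‖)⁻¹) / (1 - R) ≤ (R * (1 - R)⁻¹) / (1 - R) := by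
      have hnum : ‖q‖ * (1 - ‖q‖)⁻¹ ≤ R * (1 - R)⁻¹ := by
        apply mul_le_mul hq (inv_anti₀ h1R (by rw [hnq]; linarith))
          (inv_nonneg.mpr (by rw [hnq]; linarith)) hR0
      exact div_le_div_of_nonneg_right hnum h1R.le
    have step5 : (R * (1 - R)⁻¹) / (1 - R) = R / (1 - R) ^ 2 := by
      rw [pow_two]; rw [div_eq_mul_inv, div_eq_mul_inv, mul_inv, mul_assoc]
    linarith [step1, step2, step3 ▸ step2, step5 ▸ step4]
  have habs : ‖Complex.exp S‖ = Real.exp S.re := Complex.norm_exp S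
  have hre : |S.re| ≤ R / (1 - R) ^ 2 := by
    refine le_trans ?_ hSbound
    exact Complex.abs_re_le_norm S
  constructor
  · rw [htprod, habs]
    apply Real.exp_le_exp.mpr
    linarith [le_abs_self S.re]
  · rw [htprod, norm_inv, habs, ← Real.exp_neg]
    apply Real.exp_le_exp.mpr
    linarith [neg_abs_le S.re]

/-- Lemma 3.2 of the paper: for positive integers `m, k` with
`d = gcd(m,k)`, and `y` in the upper half-plane with `Im y ≥ d²/(2m)`, both
`|F(e(y))|` and `|1/F(e(y))|` are at most
`exp( e^{−πd²/m} / (1 − e^{−πd²/m})² )`. -/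
theorem F_bound_on_upper_half_plane
    (m k : ℕ) (hm : 0 < m) (hk : 0 < k) (y : ℂ)
    (hy : ((Nat.gcd m k : ℝ)) ^ 2 / (2 * (m : ℝ)) ≤ y.im) :
    ‖F (e y)‖ ≤
        Real.exp (Real.exp (-(Real.pi * (Nat.gcd m k : ℝ) ^ 2 / (m : ℝ))) /
          (1 - Real.exp (-(Real.pi * (Nat.gcd m k : ℝ) ^ 2 / (m : ℝ)))) ^ 2) ∧
      ‖(F (e y))⁻¹‖ ≤
        Real.exp (Real.exp (-(Real.pi * (Nat.gcd m k : ℝ) ^ 2 / (m : ℝ))) /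
          (1 - Real.exp (-(Real.pi * (Nat.gcd m k : ℝ) ^ 2 / (m : ℝ)))) ^ 2) := by
  set d : ℝ := (Nat.gcd m k : ℝ) with hd
  set R : ℝ := Real.exp (-(Real.pi * d ^ 2 / (m : ℝ))) with hR
  have hd1 : 1 ≤ d := by
    rw [hd]
    exact_mod_cast Nat.one_le_iff_ne_zero.mpr (Nat.gcd_ne_zero_left hm.ne')
  have hmpos : (0 : ℝ) < m := by exact_mod_cast hm
  have hexp_pos : 0 < Real.pi * d ^ 2 / (m : ℝ) :=
    div_pos (mul_pos Real.pi_pos (by nlinarith)) hmpos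
  have hR0 : 0 ≤ R := Real.exp_nonneg _
  have hR1 : R < 1 := by
    rw [hR, Real.exp_lt_one_iff]
    linarith
  have habs_e : ‖e y‖ = Real.exp (-(2 * Real.pi * y.im)) := by
    rw [e, Complex.norm_exp]
    congr 1
    simp [Complex.mul_re, Complex.mul_im]
  have hq : ‖e y‖ ≤ R := by
    rw [habs_e, hR, Real.exp_le_exp, neg_le_neg_iff, div_le_iff₀ hmpos]
    have h2 : d ^ 2 / (2 * (m : ℝ)) ≤ y.im := hy
    rw [div_le_iff₀ (by linarith : (0:ℝ) < 2 * (m:ℝ))] at h2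
    nlinarith [mul_le_mul_of_nonneg_left h2 Real.pi_pos.le]
  obtain ⟨h1, h2⟩ := aux_prod_bound (e y) R hR0 hR1 hq
  exact ⟨by rw [F]; exact h2, by rw [F, inv_inv]; exact h1⟩
end

section
/- As formal power series over ℤ, ∑_{n≥0} D4(n) q^n = ∏_{n≥1}(1−q^{4n})^9 / ( ∏_{n≥1}(1−q^{2n})³ · ∏_{n≥1}(1−q^{8n})^4 ) − 4q · ∏_{n≥1}(1−q^{2n}) · ∏_{n≥1}(1−q^{8n})^4 / ∏_{n≥1}(1−q^{4n})³. -/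
open PowerSeries Finset

namespace BicrankAux

noncomputable section

abbrev R := PowerSeries ℤ

/-- Congruence mod `X^M`. -/
def cong (M : ℕ) (f g : R) : Prop := (X : R) ^ M ∣ f - g

lemma cong_of_eq {M : ℕ} {f g : R} (h : f = g) : cong M f g := by
  simp [cong, h]

lemma cong.refl {M : ℕ} (f : R) : cong M f f := cong_of_eq rfl

lemma cong.symm {M : ℕ} {f g : R} (h : cong M f g) : cong M g f := by
  simpa [cong] using (dvd_neg.2 h)

lemma cong.trans {M : ℕ} {f g h : R} (h1 : cong M f g) (h2 : cong M g h) : cong M f h := by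
  have := dvd_add h1 h2
  simpa [cong] using this

lemma cong.add {M : ℕ} {f g f' g' : R} (h1 : cong M f g) (h2 : cong M f' g') :
    cong M (f + f') (g + g') := by
  have := dvd_add h1 h2
  simpa [cong, sub_add_sub_comm] using this

lemma cong.sub {M : ℕ} {f g f' g' : R} (h1 : cong M f g) (h2 : cong M f' g') :
    cong M (f - f') (g - g') := by
  have := dvd_sub h1 h2
  unfold cong at *
  convert this using 1; ring

lemma cong.mul {M : ℕ} {f g f' g' : R} (h1 : cong M f g) (h2 : cong M f' g') :
    cong M (f * f') (g * g') := by
  have : f * f' - g * g' = f * (f' - g') + (f - g) * g' := by ring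
  unfold cong at *
  rw [this]
  exact dvd_add (Dvd.dvd.mul_left h2 f) (Dvd.dvd.mul_right h1 g')

lemma cong.pow {M : ℕ} {f g : R} (h : cong M f g) : ∀ m : ℕ, cong M (f ^ m) (g ^ m)
  | 0 => cong_of_eq rfl
  | m+1 => by
      have := (cong.pow h m).mul h
      simpa [pow_succ] using this

lemma cong_coeff {M : ℕ} {f g : R} (h : cong M f g) {n : ℕ} (hn : n < M) :
    coeff (R := ℤ) n f = coeff (R := ℤ) n g := by
  have := (PowerSeries.X_pow_dvd_iff.1 h) n hn
  rw [map_sub] at this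
  linarith

lemma cong_of_coeff {M : ℕ} {f g : R} (h : ∀ n < M, coeff (R := ℤ) n f = coeff (R := ℤ) n g) :
    cong M f g := by
  refine PowerSeries.X_pow_dvd_iff.2 (fun m hm => ?_)
  rw [map_sub, h m hm, sub_self]

lemma eq_of_forall_cong {f g : R} (h : ∀ M, cong M f g) : f = g := by
  ext n
  exact cong_coeff (h (n+1)) (Nat.lt_succ_self n)

lemma cong_X_pow {M e : ℕ} (he : M ≤ e) : cong M ((X : R) ^ e) 0 := by
  unfold cong
  rw [sub_zero]
  exact pow_dvd_pow _ he

lemma cong_prod {M : ℕ} {s : Finset ℕ} {f g : ℕ → R} (h : ∀ i ∈ s, cong M (f i) (g i)) :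
    cong M (∏ i ∈ s, f i) (∏ i ∈ s, g i) := by
  classical
  induction s using Finset.induction_on with
  | empty => exact cong_of_eq rfl
  | @insert a s hx ih =>
      rw [Finset.prod_insert hx, Finset.prod_insert hx]
      exact (h a (Finset.mem_insert_self a s)).mul
        (ih (fun i hi => h i (Finset.mem_insert_of_mem hi)))

/-- Finite products `∏_{k<N} (1 + c X^(d k + r))`. -/
def Pf (c : ℤ) (d r N : ℕ) : R := ∏ k ∈ range N, (1 + (C (R := ℤ) c) * X ^ (d * k + r))

/-- The corresponding infinite product, defined coefficientwise. -/
def Pinf (c : ℤ) (d r : ℕ) : R := mk fun n => coeff (R := ℤ) n (Pf c d r (n+1))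

lemma Pf_tail_cong {c : ℤ} {d r : ℕ} (hd : 1 ≤ d) (hr : 1 ≤ r) {M K N : ℕ}
    (hK : M ≤ K + 1) (hN : K ≤ N) : cong M (Pf c d r N) (Pf c d r K) := by
  obtain ⟨t, rfl⟩ := Nat.exists_eq_add_of_le hN
  unfold Pf
  rw [Finset.prod_range_add]
  have h1 : cong M (∏ i ∈ range t, (1 + (C (R := ℤ) c) * X ^ (d * (K + i) + r))) 1 := by
    have := cong_prod (M := M) (s := range t)
      (f := fun i => 1 + (C (R := ℤ) c) * X ^ (d * (K + i) + r)) (g := fun _ => 1) ?_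
    · simpa using this
    · intro i _
      have : cong M ((C (R := ℤ) c) * X ^ (d * (K + i) + r)) 0 := by
        have he : M ≤ d * (K + i) + r := by nlinarith
        have := cong_X_pow (M := M) he
        have := (cong.refl (M := M) (C (R := ℤ) c)).mul this
        simpa using this
      have := (cong.refl (M := M) (1 : R)).add this
      simpa using this
  have := (cong.refl (M := M) (∏ k ∈ range K, (1 + (C (R := ℤ) c) * X ^ (d * k + r)))).mul h1
  simpa using this

lemma Pinf_cong {c : ℤ} {d r : ℕ} (hd : 1 ≤ d) (hr : 1 ≤ r) {M N : ℕ} (hN : M ≤ N) :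
    cong M (Pinf c d r) (Pf c d r N) := by
  refine cong_of_coeff (fun n hn => ?_)
  have h1 : coeff (R := ℤ) n (Pinf c d r) = coeff (R := ℤ) n (Pf c d r (n+1)) := coeff_mk n _
  rw [h1]
  have h2 : cong (n+1) (Pf c d r N) (Pf c d r (n+1)) :=
    Pf_tail_cong hd hr (by omega) (by omega)
  exact (cong_coeff h2.symm (Nat.lt_succ_self n))

lemma constantCoeff_Pf (c : ℤ) {d r : ℕ} (hr : 1 ≤ r) (N : ℕ) :
    constantCoeff (R := ℤ) (Pf c d r N) = 1 := by
  unfold Pf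
  rw [map_prod]
  apply Finset.prod_eq_one
  intro k _
  rw [map_add, map_mul, map_one, map_pow, constantCoeff_X]
  have : d * k + r ≠ 0 := by omega
  simp [zero_pow this]

lemma constantCoeff_Pinf (c : ℤ) {d r : ℕ} (hr : 1 ≤ r) :
    constantCoeff (R := ℤ) (Pinf c d r) = 1 := by
  have : constantCoeff (R := ℤ) (Pinf c d r) = coeff (R := ℤ) 0 (Pinf c d r) := by
    simp [PowerSeries.coeff_zero_eq_constantCoeff]
  rw [this]
  unfold Pinf
  rw [coeff_mk]
  rw [PowerSeries.coeff_zero_eq_constantCoeff]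
  exact constantCoeff_Pf c hr 1

/-- Splitting an infinite product into even-index and odd-index factors. -/
lemma Pf_split (c : ℤ) (d r : ℕ) (N : ℕ) :
    Pf c d r (2 * N) = Pf c (2*d) r N * Pf c (2*d) (r+d) N := by
  induction N with
  | zero => simp [Pf]
  | succ n ih =>
      have h2 : 2 * (n+1) = 2*n + 1 + 1 := by ring
      unfold Pf at *
      rw [h2, Finset.prod_range_succ, Finset.prod_range_succ,
        Finset.prod_range_succ, Finset.prod_range_succ, ih]
      have e1 : d * (2*n) + r = 2*d*n + r := by ring
      have e2 : d * (2*n+1) + r = 2*d*n + (r+d) := by ring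
      rw [e1, e2]
      ring

lemma Pinf_split (c : ℤ) {d r : ℕ} (hd : 1 ≤ d) (hr : 1 ≤ r) :
    Pinf c d r = Pinf c (2*d) r * Pinf c (2*d) (r+d) := by
  apply eq_of_forall_cong
  intro M
  have h1 : cong M (Pinf c d r) (Pf c d r (2*M)) := Pinf_cong hd hr (by omega)
  have h2 : cong M (Pinf c (2*d) r) (Pf c (2*d) r M) := Pinf_cong (by omega) hr le_rfl
  have h3 : cong M (Pinf c (2*d) (r+d)) (Pf c (2*d) (r+d) M) := Pinf_cong (by omega) (by omega) le_rfl
  exact (h1.trans (cong_of_eq (Pf_split c d r M))).trans ((h2.mul h3).symm)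

/-- Pairing `(1-x)(1+x) = 1-x^2` factorwise. -/
lemma Pf_pair (d r N : ℕ) :
    Pf (-1) d r N * Pf 1 d r N = Pf (-1) (2*d) (2*r) N := by
  unfold Pf
  rw [← Finset.prod_mul_distrib]
  apply Finset.prod_congr rfl
  intro k _
  have e : 2*d*k + 2*r = (d*k+r) + (d*k+r) := by ring
  rw [e, pow_add]
  simp only [map_neg, map_one]
  ring

lemma Pinf_pair {d r : ℕ} (hd : 1 ≤ d) (hr : 1 ≤ r) :
    Pinf (-1) d r * Pinf 1 d r = Pinf (-1) (2*d) (2*r) := by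
  apply eq_of_forall_cong
  intro M
  have h1 : cong M (Pinf (-1) d r) (Pf (-1) d r M) := Pinf_cong hd hr le_rfl
  have h2 : cong M (Pinf 1 d r) (Pf 1 d r M) := Pinf_cong hd hr le_rfl
  have h3 : cong M (Pinf (-1) (2*d) (2*r)) (Pf (-1) (2*d) (2*r) M) :=
    Pinf_cong (by omega) (by omega) le_rfl
  exact ((h1.mul h2).trans (cong_of_eq (Pf_pair d r M))).trans h3.symm

/-- `E j` : the infinite product `∏ (1 - X^(j(k+1)))`. -/
def E (j : ℕ) : R := Pinf (-1) j j

lemma Pf_neg_eq (d N : ℕ) :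
    Pf (-1) d d N = ∏ k ∈ range N, (1 - X ^ (d * (k+1)) : R) := by
  unfold Pf
  apply Finset.prod_congr rfl
  intro k _
  have e : d * (k+1) = d * k + d := by ring
  rw [e]
  simp only [map_neg, map_one]
  ring

section QB

variable {A : Type*} [CommRing A]

/-- Gaussian binomial coefficient as ring element, base `Q`. -/
def qb (Q : A) : ℕ → ℕ → A
  | _, 0 => 1
  | 0, _+1 => 0
  | n+1, k+1 => qb Q n k + Q^(k+1) * qb Q n (k+1)

@[simp] lemma qb_zero_right (Q : A) (n : ℕ) : qb Q n 0 = 1 := by cases n <;> rfl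

lemma qb_succ_succ (Q : A) (n k : ℕ) :
    qb Q (n+1) (k+1) = qb Q n k + Q^(k+1) * qb Q n (k+1) := rfl

lemma qb_eq_zero_of_lt (Q : A) : ∀ {n k : ℕ}, n < k → qb Q n k = 0 := by
  intro n
  induction n with
  | zero => intro k hk; match k, hk with | k+1, _ => rfl
  | succ n ih =>
      intro k hk
      match k, hk with
      | k+1, hk =>
        rw [qb_succ_succ, ih (by omega)]
        rcases Nat.lt_or_ge n (k+1) with h | h
        · rw [ih h]; ring
        · omega

/-- Key cross recurrence: `(1 - Q^(n-k)) qb(n,k) = (1 - Q^(k+1)) qb(n,k+1)`. -/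
lemma qb_cross (Q : A) : ∀ (n k : ℕ),
    (1 - Q^(n - k)) * qb Q n k = (1 - Q^(k+1)) * qb Q n (k+1) := by
  intro n
  induction n with
  | zero =>
      intro k
      cases k with
      | zero => simp [qb_eq_zero_of_lt Q (by omega : (0:ℕ) < 1)]
      | succ k => simp [qb_eq_zero_of_lt Q (by omega : (0:ℕ) < k+1),
          qb_eq_zero_of_lt Q (by omega : (0:ℕ) < k+2)]
  | succ n ih =>
      intro k
      rcases Nat.lt_or_ge n k with h | h
      · -- k ≥ n+1 : both sides zero
        rcases Nat.eq_or_lt_of_le (by omega : n + 1 ≤ k) with rfl | h2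
        · have e : n + 1 - (n+1) = 0 := by omega
          rw [e, qb_eq_zero_of_lt Q (by omega : n+1 < n+2)]
          simp
        · rw [qb_eq_zero_of_lt Q (by omega : n+1 < k),
            qb_eq_zero_of_lt Q (by omega : n+1 < k+1)]
          ring
      · -- k ≤ n
        cases k with
        | zero =>
            rw [qb_zero_right, qb_succ_succ, qb_zero_right]
            have h0 := ih 0
            rw [qb_zero_right] at h0
            have e : n - 0 = n := by omega
            rw [e] at h0
            have e2 : n + 1 - 0 = n + 1 := by omega
            rw [e2]
            linear_combination Q * h0
        | succ k =>
            -- use ih at k and k+1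
            have hk : k + 1 ≤ n := h
            have ih1 := ih k
            have ih2 := ih (k+1)
            rw [qb_succ_succ, qb_succ_succ]
            have e1 : n + 1 - (k+1) = (n - k - 1) + 1 := by omega
            have e2 : n - k = (n - k - 1) + 1 := by omega
            have e3 : n - (k+1) = n - k - 1 := by omega
            rw [e1]
            rw [e2] at ih1
            rw [e3] at ih2
            -- LHS = (1 - Q^(n-k-1+1)) * (qb n k + Q^(k+1) qb n (k+1))
            -- use ih1 : (1 - Q^(n-k-1+1)) qb n k = (1 - Q^(k+1)) qb n (k+1)
            -- RHS = (1 - Q^(k+2)) * (qb n (k+1) + Q^(k+2) qb n (k+2))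
            -- use ih2 : (1 - Q^(n-k-1)) qb n (k+1) = (1 - Q^(k+2)) qb n (k+2)
            set a := qb Q n k
            set b := qb Q n (k+1)
            set c := qb Q n (k+2)
            set m := n - k - 1
            -- goal: (1 - Q^(m+1)) * (a + Q^(k+1) b) = (1 - Q^(k+2)) * (b + Q^(k+2) c)
            -- ih1 : (1 - Q^(m+1)) a = (1 - Q^(k+1)) b
            -- ih2 : (1 - Q^m) b = (1 - Q^(k+2)) c
            linear_combination ih1 + Q^(k+2) * ih2
  
/-- Second Pascal rule. -/
lemma qb_pascal2 (Q : A) (n k : ℕ) (hk : k ≤ n) :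
    qb Q (n+1) (k+1) = qb Q n (k+1) + Q^(n-k) * qb Q n k := by
  have h := qb_cross Q n k
  rw [qb_succ_succ]
  linear_combination h

/-- `qb(n,k) * ∏_{i<k} (1 - Q^(i+1)) = ∏_{i<k} (1 - Q^(n-k+i+1))`. -/
lemma qb_mul_prod (Q : A) : ∀ (n k : ℕ), k ≤ n →
    qb Q n k * ∏ i ∈ Finset.range k, (1 - Q^(i+1))
      = ∏ i ∈ Finset.range k, (1 - Q^(n - k + i + 1)) := by
  intro n
  induction n with
  | zero => intro k hk; interval_cases k; simp
  | succ n ih =>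
      intro k hk
      cases k with
      | zero => simp
      | succ k =>
          rcases Nat.lt_or_ge n (k+1) with h | h
          · -- k+1 = n+1, i.e. k = n
            have hkn : k = n := by omega
            subst hkn
            rw [qb_succ_succ, qb_eq_zero_of_lt Q (Nat.lt_succ_self k)]
            have ihk := ih k le_rfl
            have hcong : ∀ i ∈ Finset.range (k+1), ((1:A) - Q^(k + 1 - (k+1) + i + 1)) = (1 - Q^(i+1)) := by
              intro i _
              have e : k + 1 - (k+1) + i + 1 = i + 1 := by omega
              rw [e]
            rw [Finset.prod_congr rfl hcong]
            have hcong2 : ∀ i ∈ Finset.range k, ((1:A) - Q^(k - k + i + 1)) = (1 - Q^(i+1)) := by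
              intro i _
              have e : k - k + i + 1 = i + 1 := by omega
              rw [e]
            rw [Finset.prod_congr rfl hcong2] at ihk
            rw [Finset.prod_range_succ (f := fun i => (1:A) - Q^(i+1))]
            linear_combination (1 - Q^(k+1)) * ihk
          · -- k + 1 ≤ n
            obtain ⟨m, rfl⟩ : ∃ m, n = k + 1 + m := ⟨n - (k+1), by omega⟩
            have ihk := ih k (by omega)
            have ihk1 := ih (k+1) (by omega)
            have e1 : k + 1 + m - k = m + 1 := by omega
            have e2 : k + 1 + m - (k+1) = m := by omega
            rw [e2] at ihk1
            rw [e1] at ihk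
            have hP' : (∏ i ∈ Finset.range (k+1), (1 - Q^(m + i + 1)))
                = (1 - Q^(m+1)) * ∏ i ∈ Finset.range k, (1 - Q^(m + 1 + i + 1)) := by
              rw [Finset.prod_range_succ']
              have h1 : ∀ i ∈ Finset.range k, ((1:A) - Q^(m + (i+1) + 1)) = (1 - Q^(m + 1 + i + 1)) := by
                intro i _
                have e : m + (i+1) + 1 = m + 1 + i + 1 := by omega
                rw [e]
              rw [Finset.prod_congr rfl h1]
              have h2 : m + 0 + 1 = m + 1 := by omega
              rw [h2, mul_comm]
            rw [hP'] at ihk1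
            rw [Finset.prod_range_succ] at ihk1
            have etop : k + 1 + m + 1 - (k + 1) = m + 1 := by omega
            rw [etop]
            rw [qb_succ_succ,
              Finset.prod_range_succ (f := fun i => (1 - Q^(i+1))),
              Finset.prod_range_succ (f := fun i => (1 - Q^(m + 1 + i + 1)))]
            have etop2 : m + 1 + k + 1 = k + 1 + (m + 1) := by omega
            rw [etop2]
            -- goal: (a + Q^(k+1) b) * (Pk * (1 - Q^(k+1)))
            --     = P * (1 - Q^(k+1+(m+1)))
            -- ihk : a * Pk = P ;  ihk1 : b * (Pk * (1-Q^(k+1))) = (1-Q^(m+1)) * P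
            linear_combination (1 - Q^(k+1)) * ihk + Q^(k+1) * ihk1

end QB

section JTPfin

variable {A : Type*} [CommRing A]

/-- squared distance to center -/
def msq (j N : ℕ) : ℕ := (((j:ℤ) - N).natAbs)^2

lemma msq_cast (j N : ℕ) : (msq j N : ℤ) = ((j:ℤ) - N)^2 := by
  unfold msq
  push_cast [Int.natAbs_sq]
  try exact sq_abs _

lemma qb_self (Q : A) : ∀ n, qb Q n n = 1
  | 0 => rfl
  | n+1 => by
      rw [qb_succ_succ, qb_self Q n, qb_eq_zero_of_lt Q (Nat.lt_succ_self n)]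
      ring

lemma qb_one_idx (Q : A) (N : ℕ) :
    qb Q (2*N+2) 1 = qb Q (2*N) 0 * (1 + Q^(2*N+1)) + Q^1 * qb Q (2*N) 1 := by
  have h1 : qb Q (2*N+2) 1 = qb Q (2*N+1) 0 + Q^1 * qb Q (2*N+1) 1 := qb_succ_succ Q (2*N+1) 0
  have h2 : qb Q (2*N+1) 1 = qb Q (2*N) 1 + Q^(2*N-0) * qb Q (2*N) 0 :=
    qb_pascal2 Q (2*N) 0 (by omega)
  rw [h1, h2, qb_zero_right, qb_zero_right]
  have e : 2*N - 0 = 2*N := by omega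
  rw [e]
  have e2 : Q^1 * Q^(2*N) = Q^(2*N+1) := by rw [← pow_add]; congr 1; omega
  linear_combination Q^1 * e2

lemma qb_three (Q : A) (N j : ℕ) (h2 : 2 ≤ j) (hj : j ≤ 2*N+1) :
    qb Q (2*N+2) j = qb Q (2*N) (j-1) * (1 + Q^(2*N+1))
      + Q^j * qb Q (2*N) j + Q^(2*N+2-j) * qb Q (2*N) (j-2) := by
  obtain ⟨u, rfl⟩ : ∃ u, j = u + 2 := ⟨j - 2, by omega⟩
  have hu : u + 1 ≤ 2*N := by omega
  have h1 : qb Q (2*N+2) (u+2) = qb Q (2*N+1) (u+1) + Q^(u+2) * qb Q (2*N+1) (u+2) :=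
    qb_succ_succ Q (2*N+1) (u+1)
  have h2' : qb Q (2*N+1) (u+1) = qb Q (2*N) (u+1) + Q^(2*N-u) * qb Q (2*N) u :=
    qb_pascal2 Q (2*N) u (by omega)
  have h3 : qb Q (2*N+1) (u+2) = qb Q (2*N) (u+2) + Q^(2*N-(u+1)) * qb Q (2*N) (u+1) :=
    qb_pascal2 Q (2*N) (u+1) (by omega)
  rw [h1, h2', h3]
  have e1 : u + 2 - 1 = u + 1 := by omega
  have e2 : u + 2 - 2 = u := by omega
  have e3 : 2*N + 2 - (u+2) = 2*N - u := by omega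
  rw [e1, e2, e3]
  have e4 : Q^(u+2) * Q^(2*N-(u+1)) = Q^(2*N+1) := by
    rw [← pow_add]; congr 1; omega
  linear_combination qb Q (2*N) (u+1) * e4

lemma shift_one (M : ℕ) (f : ℕ → A) (z : A) :
    ∑ j ∈ Finset.range M, f j * z^(j+1)
      = ∑ j ∈ Finset.range (M+1), (if j = 0 then 0 else f (j-1)) * z^j := by
  rw [Finset.sum_range_succ']
  simp

lemma shift_two (M : ℕ) (f : ℕ → A) (z : A) :
    ∑ j ∈ Finset.range M, f j * z^(j+2)
      = ∑ j ∈ Finset.range (M+2), (if j ≤ 1 then 0 else f (j-2)) * z^j := by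
  rw [Finset.sum_range_succ', Finset.sum_range_succ']
  have h : ∀ j, (if j + 1 + 1 ≤ 1 then (0:A) else f (j+1+1-2)) = f j := by
    intro j
    rw [if_neg (by omega)]
    congr 1
  simp [h]

lemma sum_range_extend (M t : ℕ) (f : ℕ → A) (h : ∀ j, M ≤ j → f j = 0) :
    ∑ j ∈ Finset.range M, f j = ∑ j ∈ Finset.range (M+t), f j := by
  apply Finset.sum_subset (Finset.range_subset_range.2 (Nat.le_add_right M t))
  intro j _ hj
  exact h j (by simpa using hj)

/-- Finite Jacobi triple product. -/
lemma jtp (w z : A) : ∀ N : ℕ,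
    ∏ k ∈ Finset.range N, ((1 + z * w^(2*k+1)) * (z + w^(2*k+1)))
      = ∑ j ∈ Finset.range (2*N+1), qb (w^2) (2*N) j * w^(msq j N) * z^j := by
  intro N
  induction N with
  | zero => simp [msq]
  | succ N ih =>
      rw [Finset.prod_range_succ, ih]
      have expand : (∑ j ∈ Finset.range (2*N+1), qb (w^2) (2*N) j * w^(msq j N) * z^j)
            * ((1 + z * w^(2*N+1)) * (z + w^(2*N+1)))
          = (∑ j ∈ Finset.range (2*N+1),
              ((1 + w^(4*N+2)) * (qb (w^2) (2*N) j * w^(msq j N))) * z^(j+1))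
          + ((∑ j ∈ Finset.range (2*N+1),
              (w^(2*N+1) * (qb (w^2) (2*N) j * w^(msq j N))) * z^j)
          + (∑ j ∈ Finset.range (2*N+1),
              (w^(2*N+1) * (qb (w^2) (2*N) j * w^(msq j N))) * z^(j+2))) := by
        rw [Finset.sum_mul, ← Finset.sum_add_distrib, ← Finset.sum_add_distrib]
        apply Finset.sum_congr rfl
        intro j _
        have h42 : w^(4*N+2) = w^(2*N+1) * w^(2*N+1) := by
          rw [← pow_add]; congr 1; omega
        rw [h42]
        ring
      rw [expand, shift_one, shift_two]
      -- extend all three sums to range (2*N+3)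
      have ext1 : ∑ j ∈ Finset.range (2*N+1+1),
            (if j = 0 then 0 else (1 + w^(4*N+2)) * (qb (w^2) (2*N) (j-1) * w^(msq (j-1) N))) * z^j
          = ∑ j ∈ Finset.range (2*N+3),
            (if j = 0 then 0 else (1 + w^(4*N+2)) * (qb (w^2) (2*N) (j-1) * w^(msq (j-1) N))) * z^j := by
        have := sum_range_extend (A := A) (2*N+2) 1
          (fun j => (if j = 0 then 0 else (1 + w^(4*N+2)) * (qb (w^2) (2*N) (j-1) * w^(msq (j-1) N))) * z^j) ?_
        · simpa using this
        · intro j hj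
          rw [if_neg (by omega), qb_eq_zero_of_lt (w^2) (by omega : 2*N < j - 1)]
          ring
      have ext2 : ∑ j ∈ Finset.range (2*N+1),
            (w^(2*N+1) * (qb (w^2) (2*N) j * w^(msq j N))) * z^j
          = ∑ j ∈ Finset.range (2*N+3),
            (w^(2*N+1) * (qb (w^2) (2*N) j * w^(msq j N))) * z^j := by
        have := sum_range_extend (A := A) (2*N+1) 2
          (fun j => (w^(2*N+1) * (qb (w^2) (2*N) j * w^(msq j N))) * z^j) ?_
        · simpa using this
        · intro j hj
          rw [qb_eq_zero_of_lt (w^2) (by omega : 2*N < j)]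
          ring
      rw [ext1, ext2]
      have e3 : 2*N+1+2 = 2*N+3 := by omega
      rw [e3]
      rw [← Finset.sum_add_distrib, ← Finset.sum_add_distrib]
      have erange : 2*(N+1)+1 = 2*N+3 := by omega
      rw [erange]
      apply Finset.sum_congr rfl
      intro j hj
      have hj' : j < 2*N+3 := Finset.mem_range.1 hj
      have e2N2 : 2*(N+1) = 2*N+2 := by omega
      rw [e2N2]
      rcases Nat.eq_zero_or_pos j with rfl | hj0
      · -- j = 0
        rw [if_pos rfl, if_pos (by omega), qb_zero_right, qb_zero_right]
        have em : msq 0 (N+1) = msq 0 N + (2*N+1) := by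
          have : (msq 0 (N+1) : ℤ) = (msq 0 N : ℤ) + (2*N+1) := by
            rw [msq_cast, msq_cast]; push_cast; ring
          exact_mod_cast this
        rw [em, pow_add]
        ring
      rcases Nat.lt_or_ge j 2 with hj1 | hj2
      · -- j = 1
        have hj1' : j = 1 := by omega
        subst hj1'
        rw [if_neg (by omega), if_pos (by omega)]
        have em1 : msq 0 N = msq 1 (N+1) := by
          have : (msq 0 N : ℤ) = (msq 1 (N+1) : ℤ) := by
            rw [msq_cast, msq_cast]; push_cast; ring
          exact_mod_cast this
        have em2 : msq 1 N + (2*N+1) = msq 1 (N+1) + 2*1 := by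
          have : ((msq 1 N : ℤ)) + (2*N+1) = (msq 1 (N+1) : ℤ) + 2*1 := by
            rw [msq_cast, msq_cast]; push_cast; ring
          exact_mod_cast this
        have h1 := qb_one_idx (w^2) N
        -- goal: qb (2N+2) 1 * w^(msq 1 (N+1)) * z^1 = ...
        have hw1 : w^(msq 1 N) * w^(2*N+1) = w^(msq 1 (N+1)) * (w^2)^1 := by
          rw [← pow_add, ← pow_mul, ← pow_add, em2]
        simp only [Nat.sub_self]
        rw [h1, em1]
        -- expand and use hw1
        have e4 : w^(4*N+2) = (w^2)^(2*N+1) := by rw [← pow_mul]; congr 1; omega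
        rw [e4]
        linear_combination (qb (w^2) (2*N) 1 * z) * hw1
      · -- 2 ≤ j
        rw [if_neg (by omega), if_neg (by omega)]
        rcases Nat.lt_or_ge (2*N+1) j with hbig | hsmall
        · -- j = 2N+2
          have hj22 : j = 2*N+2 := by omega
          subst hj22
          rw [qb_self, qb_eq_zero_of_lt (w^2) (by omega : 2*N < 2*N+2-1),
            qb_eq_zero_of_lt (w^2) (by omega : 2*N < 2*N+2)]
          have e5 : 2*N+2-2 = 2*N := by omega
          rw [e5, qb_self]
          have em : msq (2*N) N + (2*N+1) = msq (2*N+2) (N+1) := by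
            have h' : ((msq (2*N) N : ℤ)) + (2*N+1) = (msq (2*N+2) (N+1) : ℤ) := by
              rw [msq_cast, msq_cast]; push_cast; ring
            exact_mod_cast h'
          rw [← em, pow_add]
          ring
        · -- 2 ≤ j ≤ 2N+1
          have h3 := qb_three (w^2) N j hj2 hsmall
          rw [h3]
          have em1 : msq (j-1) N = msq j (N+1) := by
            have : ((msq (j-1) N : ℤ)) = (msq j (N+1) : ℤ) := by
              rw [msq_cast, msq_cast]
              have : ((j - 1 : ℕ) : ℤ) = (j:ℤ) - 1 := by omega
              rw [this]; push_cast; ring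
            exact_mod_cast this
          have em2 : msq j N + (2*N+1) = msq j (N+1) + 2*j := by
            have : ((msq j N : ℤ)) + (2*N+1) = (msq j (N+1) : ℤ) + 2*j := by
              rw [msq_cast, msq_cast]; push_cast; ring
            exact_mod_cast this
          have em3 : msq (j-2) N + (2*N+1) = msq j (N+1) + 2*(2*N+2-j) := by
            have h1 : ((j - 2 : ℕ) : ℤ) = (j:ℤ) - 2 := by omega
            have h2' : ((2*N+2-j : ℕ) : ℤ) = 2*(N:ℤ)+2-j := by omega
            have : ((msq (j-2) N : ℤ)) + (2*N+1) = (msq j (N+1) : ℤ) + 2*(2*(N:ℤ)+2-j) := by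
              rw [msq_cast, msq_cast, h1]; push_cast; ring
            have h3' : ((msq (j-2) N : ℤ)) + (2*N+1) = (msq j (N+1) : ℤ) + 2*((2*N+2-j : ℕ) : ℤ) := by
              rw [h2']; exact this
            exact_mod_cast h3'
          have hw1 : w^(msq (j-1) N) = w^(msq j (N+1)) := by rw [em1]
          have hw2 : w^(msq j N) * w^(2*N+1) = w^(msq j (N+1)) * (w^2)^j := by
            rw [← pow_add, ← pow_mul, ← pow_add, em2]
          have hw3 : w^(msq (j-2) N) * w^(2*N+1) = w^(msq j (N+1)) * (w^2)^(2*N+2-j) := by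
            rw [← pow_add, ← pow_mul, ← pow_add, em3]
          have e4 : w^(4*N+2) = (w^2)^(2*N+1) := by rw [← pow_mul]; congr 1; omega
          rw [e4, hw1]
          linear_combination (z^j * qb (w^2) (2*N) j) * hw2 + (z^j * qb (w^2) (2*N) (j-2)) * hw3

end JTPfin

section Series

lemma cong_sum {M : ℕ} {s : Finset ℕ} {f g : ℕ → R} (h : ∀ i ∈ s, cong M (f i) (g i)) :
    cong M (∑ i ∈ s, f i) (∑ i ∈ s, g i) := by
  classical
  induction s using Finset.induction_on with
  | empty => exact cong_of_eq rfl
  | @insert a s hx ih =>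
      rw [Finset.sum_insert hx, Finset.sum_insert hx]
      exact (h a (Finset.mem_insert_self a s)).add
        (ih (fun i hi => h i (Finset.mem_insert_of_mem hi)))

lemma cong_mul_Xpow {M e : ℕ} {f g : R} (h : cong M f g) :
    cong (M + e) ((X:R)^e * f) ((X:R)^e * g) := by
  unfold cong at *
  obtain ⟨t, ht⟩ := h
  exact ⟨t, by rw [← mul_sub, ht, pow_add]; ring⟩

lemma cancel_Xpow {M e : ℕ} {f g : R} (h : cong (M + e) ((X:R)^e * f) ((X:R)^e * g)) :
    cong M f g := by
  unfold cong at *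
  obtain ⟨t, ht⟩ := h
  refine ⟨t, ?_⟩
  have hX : (X:R)^e ≠ 0 := pow_ne_zero e PowerSeries.X_ne_zero
  apply mul_left_cancel₀ hX
  calc (X:R)^e * (f - g) = (X:R)^e * f - (X:R)^e * g := by ring
  _ = (X:R)^(M+e) * t := ht
  _ = (X:R)^e * ((X:R)^M * t) := by rw [pow_add]; ring

/-- sharper truncation: only needs `M ≤ d*K + r`. -/
lemma Pf_tail_cong' {c : ℤ} {d r : ℕ} {M K N : ℕ}
    (hK : M ≤ d * K + r) (hN : K ≤ N) : cong M (Pf c d r N) (Pf c d r K) := by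
  obtain ⟨t, rfl⟩ := Nat.exists_eq_add_of_le hN
  unfold Pf
  rw [Finset.prod_range_add]
  have h1 : cong M (∏ i ∈ range t, (1 + (C (R := ℤ) c) * X ^ (d * (K + i) + r))) 1 := by
    have := cong_prod (M := M) (s := range t)
      (f := fun i => 1 + (C (R := ℤ) c) * X ^ (d * (K + i) + r)) (g := fun _ => 1) ?_
    · simpa using this
    · intro i _
      have he : M ≤ d * (K + i) + r := by nlinarith
      have h2 := cong_X_pow (M := M) he
      have h3 := (cong.refl (M := M) (C (R := ℤ) c)).mul h2
      have h4 := (cong.refl (M := M) (1 : R)).add h3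
      simpa using h4
  have := (cong.refl (M := M) (∏ k ∈ range K, (1 + (C (R := ℤ) c) * X ^ (d * k + r)))).mul h1
  simpa using this

lemma Pinf_cong' {c : ℤ} {d r : ℕ} (hd : 1 ≤ d) (hr : 1 ≤ r) {M N : ℕ} (hN : M ≤ d * N + r) :
    cong M (Pinf c d r) (Pf c d r N) := by
  refine cong_of_coeff (fun n hn => ?_)
  rw [Pinf, coeff_mk]
  rcases Nat.le_total (n+1) N with h | h
  · exact (cong_coeff (Pf_tail_cong' (by nlinarith) h) (Nat.lt_succ_self n)).symm
  · exact (cong_coeff (Pf_tail_cong' (c := c) (K := N) (by omega) h) (Nat.lt_succ_self n))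

/-- `∑_m ε^m q^(s m²)` (with multiplicity 2 for `m ≠ 0`). -/
def sqS (s : ℕ) (e : ℤ) : R :=
  mk fun n => ∑ m ∈ range (n+1), (if n = s * m^2 then (if m = 0 then 1 else 2 * e^m) else 0)

/-- `∑_{m ≥ 0} q^(s m(m+1))`. -/
def triS (s : ℕ) : R :=
  mk fun n => ∑ m ∈ range (n+1), (if n = s * (m^2 + m) then 1 else 0)

lemma sqS_coeff_of {s : ℕ} (hs : 1 ≤ s) (e : ℤ) (m n : ℕ) (h : n = s * m^2) :
    coeff (R := ℤ) n (sqS s e) = if m = 0 then 1 else 2 * e^m := by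
  rw [sqS, coeff_mk]
  have hfm : (if n = s * m^2 then (if m = 0 then (1:ℤ) else 2 * e^m) else 0)
      = (if m = 0 then (1:ℤ) else 2 * e^m) := if_pos h
  refine (Finset.sum_eq_single_of_mem m ?_ ?_).trans hfm
  · apply Finset.mem_range.2
    rcases Nat.eq_zero_or_pos m with rfl | hm
    · omega
    · nlinarith
  · intro m' _ hm'
    rw [if_neg]
    intro hcon
    apply hm'
    have h2 : m'^2 = m^2 := Nat.eq_of_mul_eq_mul_left (by omega) (hcon.symm.trans h)
    exact Nat.pow_left_injective (by omega) h2

lemma sqS_coeff_zero {s : ℕ} (e : ℤ) (n : ℕ) (h : ∀ m : ℕ, n ≠ s * m^2) :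
    coeff (R := ℤ) n (sqS s e) = 0 := by
  rw [sqS, coeff_mk]
  apply Finset.sum_eq_zero
  intro m _
  rw [if_neg (h m)]

lemma triS_coeff_of {s : ℕ} (hs : 1 ≤ s) (m n : ℕ) (h : n = s * (m^2 + m)) :
    coeff (R := ℤ) n (triS s) = 1 := by
  rw [triS, coeff_mk]
  have huniq : ∀ m' : ℕ, n = s * (m'^2 + m') → m' = m := by
    intro m' h'
    have h2 : m'^2 + m' = m^2 + m := by
      have := h'.symm.trans h
      exact Nat.eq_of_mul_eq_mul_left (by omega) this
    nlinarith [sq_nonneg (m' - m), sq_nonneg (m - m')]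
  have hfm : (if n = s * (m^2 + m) then (1:ℤ) else 0) = 1 := if_pos h
  refine (Finset.sum_eq_single_of_mem m ?_ ?_).trans hfm
  · apply Finset.mem_range.2
    nlinarith
  · intro m' _ hm'
    rw [if_neg]
    intro hcon
    exact hm' (huniq m' hcon)

lemma triS_coeff_zero {s : ℕ} (n : ℕ) (h : ∀ m : ℕ, n ≠ s * (m^2 + m)) :
    coeff (R := ℤ) n (triS s) = 0 := by
  rw [triS, coeff_mk]
  apply Finset.sum_eq_zero
  intro m _
  rw [if_neg (h m)]

end Series

section Central

lemma Pf_as_powQ (d N : ℕ) : Pf (-1) d d N = ∏ i ∈ range N, (1 - ((X:R)^d)^(i+1)) := by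
  unfold Pf
  apply Finset.prod_congr rfl
  intro i _
  rw [← pow_mul]
  have e : d * (i+1) = d * i + d := by ring
  rw [e]
  simp only [map_neg, map_one]
  ring

/-- formal inverse of `E (2s) = Pinf (-1) (2s) (2s)` -/
def Winv (s : ℕ) : R := PowerSeries.invOfUnit (Pinf (-1) (2*s) (2*s)) 1

lemma WE (s : ℕ) (hs : 1 ≤ s) : Pinf (-1) (2*s) (2*s) * Winv s = 1 := by
  apply PowerSeries.mul_invOfUnit
  rw [constantCoeff_Pinf (-1) (by omega : 1 ≤ 2*s)]
  rfl

lemma qb_central {s : ℕ} (hs : 1 ≤ s) {M N j : ℕ} (hj : j ≤ 2*N)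
    (h1 : M ≤ 2*s*(j+1)) (h2 : M ≤ 2*s*(2*N - j + 1)) :
    cong M (qb ((X:R)^(2*s)) (2*N) j) (Winv s) := by
  have hmul := qb_mul_prod ((X:R)^(2*s)) (2*N) j hj
  have hR1 : cong M (∏ i ∈ range j, (1 - ((X:R)^(2*s))^(2*N - j + i + 1))) 1 := by
    have h := cong_prod (M := M) (s := range j)
      (f := fun i => 1 - ((X:R)^(2*s))^(2*N - j + i + 1)) (g := fun _ => 1) ?_
    · simpa using h
    · intro i _
      rw [← pow_mul]
      have he : M ≤ 2*s*(2*N - j + i + 1) := by nlinarith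
      have h3 := (cong.refl (M := M) (1 : R)).sub (cong_X_pow (M := M) he)
      simpa using h3
  have hPf : cong M (Pinf (-1) (2*s) (2*s)) (Pf (-1) (2*s) (2*s) j) := by
    apply Pinf_cong' (by omega) (by omega)
    nlinarith
  have hW := WE s hs
  have e1 : qb ((X:R)^(2*s)) (2*N) j
      = qb ((X:R)^(2*s)) (2*N) j * (Pinf (-1) (2*s) (2*s) * Winv s) := by
    rw [hW, mul_one]
  have c1 : cong M (qb ((X:R)^(2*s)) (2*N) j * (Pinf (-1) (2*s) (2*s) * Winv s))
      (qb ((X:R)^(2*s)) (2*N) j * (Pf (-1) (2*s) (2*s) j * Winv s)) :=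
    (cong.refl _).mul (hPf.mul (cong.refl _))
  have e2 : qb ((X:R)^(2*s)) (2*N) j * (Pf (-1) (2*s) (2*s) j * Winv s)
      = (∏ i ∈ range j, (1 - ((X:R)^(2*s))^(2*N - j + i + 1))) * Winv s := by
    rw [Pf_as_powQ, ← hmul]; ring
  have c2 : cong M ((∏ i ∈ range j, (1 - ((X:R)^(2*s))^(2*N - j + i + 1))) * Winv s)
      (Winv s) := by
    have h := hR1.mul (cong.refl (Winv s))
    simpa using h
  exact (cong_of_eq e1).trans (c1.trans ((cong_of_eq e2).trans c2))

/-- helpers on `msq` and `trid`. -/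
def trid (j N : ℕ) : ℕ := msq j N + j - N

lemma msq_add (N m : ℕ) : msq (N+m) N = m^2 := by
  unfold msq
  congr 1
  have : ((N+m : ℕ) : ℤ) - N = (m : ℤ) := by push_cast; ring
  rw [this]
  exact Int.natAbs_natCast m

lemma msq_sub {N m : ℕ} (h : m ≤ N) : msq (N-m) N = m^2 := by
  unfold msq
  congr 1
  have : ((N-m : ℕ) : ℤ) - N = -(m : ℤ) := by
    have : ((N-m : ℕ) : ℤ) = (N:ℤ) - m := by omega
    rw [this]; ring
  rw [this]
  exact Int.natAbs_neg m ▸ Int.natAbs_natCast m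

lemma msq_natAbs (j N : ℕ) : msq j N = (((j:ℤ) - N).natAbs)^2 := rfl

lemma msq_cases {j N m : ℕ} (h : msq j N = m^2) : j = N + m ∨ (m ≤ N ∧ j = N - m) := by
  have h2 : ((j:ℤ) - N).natAbs = m :=
    Nat.pow_left_injective (by omega) h
  rcases Int.natAbs_eq_iff.mp h2 with h3 | h3 <;> omega

lemma sq_add_self_inj {a b : ℕ} (h : a^2 + a = b^2 + b) : a = b := by
  nlinarith [sq_nonneg a, sq_nonneg b]

lemma msq_j_ge (j N : ℕ) : N ≤ msq j N + j := by
  rcases Nat.le_total N j with h | h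
  · omega
  · have hm : msq j N = (N-j)^2 := by
      have hj : j = N - (N - j) := by omega
      conv_lhs => rw [hj]
      exact msq_sub (by omega)
    have h2 : N - j ≤ (N-j)^2 := by nlinarith
    omega

lemma trid_add (N m : ℕ) : trid (N+m) N = m^2 + m := by
  unfold trid
  rw [msq_add]
  omega

lemma trid_sub {N m : ℕ} (h : m+1 ≤ N) : trid (N-(m+1)) N = m^2 + m := by
  unfold trid
  rw [msq_sub (by omega)]
  have : (m+1)^2 = m^2 + 2*m + 1 := by ring
  omega

lemma trid_cases {j N m : ℕ} (h : trid j N = m^2 + m) :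
    j = N + m ∨ (m+1 ≤ N ∧ j = N - (m+1)) := by
  unfold trid at h
  rcases Nat.le_total N j with hle | hle
  · left
    have hmsq : msq j N = (j - N)^2 := by
      have hj : j = N + (j - N) := by omega
      conv_lhs => rw [hj]
      exact msq_add N (j - N)
    have h5 : (j-N)^2 + (j-N) = m^2 + m := by omega
    have := sq_add_self_inj h5
    omega
  · have hmsq : msq j N = (N - j)^2 := by
      have hj : j = N - (N - j) := by omega
      conv_lhs => rw [hj]
      exact msq_sub (by omega)
    have h2 : (N-j)^2 + j - N = m^2 + m := by rw [← hmsq]; exact h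
    rcases Nat.eq_zero_or_pos (N - j) with ht0 | htpos
    · left
      rw [ht0] at h2
      have hm0 : m = 0 := by nlinarith [(by omega : m^2 + m = 0)]
      omega
    · right
      obtain ⟨u, hu⟩ : ∃ u, N - j = u + 1 := ⟨N - j - 1, by omega⟩
      rw [hu] at h2
      have e : (u+1)^2 = u^2 + 2*u + 1 := by ring
      have h4 : u^2 + u = m^2 + m := by omega
      have := sq_add_self_inj h4
      omega

end Central

section SumEval

lemma coeff_term_pow (n e : ℕ) (a : ℤ) :
    coeff (R := ℤ) n ((X:R)^e * (C (R := ℤ) a)) = if n = e then a else 0 := by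
  rw [PowerSeries.coeff_mul_C, PowerSeries.coeff_X_pow]
  split_ifs <;> simp

lemma sum_msq_eval {s : ℕ} (hs : 1 ≤ s) (c : ℤ) (hc : c^2 = 1) {M N : ℕ} (hN : M ≤ N) :
    cong M (∑ j ∈ range (2*N+1), (X:R)^(s * msq j N) * (C (R := ℤ) (c^j)))
           ((C (R := ℤ) (c^N)) * sqS s c) := by
  apply cong_of_coeff
  intro n hn
  rw [map_sum, PowerSeries.coeff_C_mul]
  have hterm : ∀ j, coeff (R := ℤ) n ((X:R)^(s * msq j N) * (C (R := ℤ) (c^j)))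
      = if n = s * msq j N then c^j else 0 := fun j => coeff_term_pow n _ _
  rw [Finset.sum_congr rfl (fun j _ => hterm j)]
  by_cases hex : ∃ m : ℕ, n = s * m^2
  · obtain ⟨m, hm⟩ := hex
    have hmn : m ≤ n := by
      rcases Nat.eq_zero_or_pos m with rfl | hm1
      · omega
      · nlinarith
    rcases Nat.eq_zero_or_pos m with rfl | hm1
    · -- m = 0 : n = 0, only j = N contributes
      have hn0 : n = 0 := by simpa using hm
      rw [sqS_coeff_of hs c 0 n (by simpa using hm)]
      simp only [if_pos rfl]
      have hside : ∀ j ∈ range (2*N+1), j ≠ N →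
          (if n = s * msq j N then c^j else 0) = 0 := by
        intro j _ hjne
        rw [if_neg]
        intro hcon
        have h0 : msq j N = 0 := by
          rcases Nat.eq_zero_or_pos (msq j N) with h | h
          · exact h
          · nlinarith
        have := msq_cases (m := 0) (by simpa using h0)
        omega
      have hsum := Finset.sum_eq_single_of_mem (f := fun j => if n = s * msq j N then c^j else 0)
        (a := N) (s := range (2*N+1)) (Finset.mem_range.2 (by omega)) hside
      rw [hsum]
      have hz : msq N N = 0 := by simpa using msq_add N 0
      rw [hz, if_pos (show n = s * 0 by omega)]
      simp
    · -- m ≥ 1 : contributions j = N - m and j = N + m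
      have hmN : m ≤ N := by omega
      rw [sqS_coeff_of hs c m n hm, if_neg (show ¬ m = 0 by omega)]
      have hsub : ({N - m, N + m} : Finset ℕ) ⊆ range (2*N+1) := by
        intro x hx
        simp only [Finset.mem_insert, Finset.mem_singleton] at hx
        rcases hx with rfl | rfl <;> (apply Finset.mem_range.2; omega)
      have hzero : ∀ j ∈ range (2*N+1), j ∉ ({N - m, N + m} : Finset ℕ) →
          (if n = s * msq j N then c^j else 0) = 0 := by
        intro j _ hj
        rw [if_neg]
        intro hcon
        have hmsqm : msq j N = m^2 := by
          have h5 : s * m^2 = s * msq j N := hm.symm.trans hcon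
          exact (Nat.eq_of_mul_eq_mul_left (Nat.lt_of_lt_of_le Nat.zero_lt_one hs) h5).symm
        have := msq_cases hmsqm
        simp only [Finset.mem_insert, Finset.mem_singleton] at hj
        omega
      rw [← Finset.sum_subset hsub hzero]
      have hne : N - m ≠ N + m := by omega
      rw [Finset.sum_pair hne]
      have hv1 : (if n = s * msq (N-m) N then c^(N-m) else 0) = c^(N-m) := by
        rw [if_pos]
        rw [msq_sub hmN]
        exact hm
      have hv2 : (if n = s * msq (N+m) N then c^(N+m) else 0) = c^(N+m) := by
        rw [if_pos]
        rw [msq_add]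
        exact hm
      rw [hv1, hv2]
      have hcc : c^(N-m) = c^(N+m) := by
        have e1 : c^(N+m) = c^(N-m) * (c^2)^m := by
          rw [← pow_mul, ← pow_add]
          congr 1
          omega
        rw [e1, hc, one_pow, mul_one]
      rw [hcc]
      have e2 : c^N * (2 * c^m) = 2 * (c^N * c^m) := by ring
      rw [e2, ← pow_add]
      ring
  · -- no representation: both sides zero
    rw [sqS_coeff_zero c n (by push_neg at hex; exact hex), mul_zero]
    apply Finset.sum_eq_zero
    intro j _
    rw [if_neg]
    intro hcon
    exact hex ⟨((j:ℤ) - N).natAbs, by rw [hcon]; rfl⟩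

lemma sum_tri_eval {s : ℕ} (hs : 1 ≤ s) {M N : ℕ} (hN : M ≤ N) :
    cong M (∑ j ∈ range (2*N+1), (X:R)^(s * trid j N))
           ((C (R := ℤ) 2) * triS s) := by
  apply cong_of_coeff
  intro n hn
  rw [map_sum, PowerSeries.coeff_C_mul]
  have hterm : ∀ j, coeff (R := ℤ) n ((X:R)^(s * trid j N))
      = if n = s * trid j N then 1 else 0 := by
    intro j
    have := coeff_term_pow n (s * trid j N) 1
    simpa using this
  rw [Finset.sum_congr rfl (fun j _ => hterm j)]
  by_cases hex : ∃ m : ℕ, n = s * (m^2 + m)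
  · obtain ⟨m, hm⟩ := hex
    have hmn : m ≤ n := by nlinarith
    have hmN : m + 1 ≤ N := by omega
    rw [triS_coeff_of hs m n hm]
    have hsub : ({N - (m+1), N + m} : Finset ℕ) ⊆ range (2*N+1) := by
      intro x hx
      simp only [Finset.mem_insert, Finset.mem_singleton] at hx
      rcases hx with rfl | rfl <;> (apply Finset.mem_range.2; omega)
    have hzero : ∀ j ∈ range (2*N+1), j ∉ ({N - (m+1), N + m} : Finset ℕ) →
        (if n = s * trid j N then (1:ℤ) else 0) = 0 := by
      intro j _ hj
      rw [if_neg]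
      intro hcon
      have htr : trid j N = m^2 + m := by
        have h5 : s * (m^2 + m) = s * trid j N := hm.symm.trans hcon
        exact (Nat.eq_of_mul_eq_mul_left (Nat.lt_of_lt_of_le Nat.zero_lt_one hs) h5).symm
      have := trid_cases htr
      simp only [Finset.mem_insert, Finset.mem_singleton] at hj
      omega
    rw [← Finset.sum_subset hsub hzero]
    have hne : N - (m+1) ≠ N + m := by omega
    rw [Finset.sum_pair hne]
    have hv1 : (if n = s * trid (N-(m+1)) N then (1:ℤ) else 0) = 1 := by
      rw [if_pos]
      rw [trid_sub hmN]
      exact hm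
    have hv2 : (if n = s * trid (N+m) N then (1:ℤ) else 0) = 1 := by
      rw [if_pos]
      rw [trid_add]
      exact hm
    rw [hv1, hv2]
    ring
  · rw [triS_coeff_zero n (by push_neg at hex; exact hex), mul_zero]
    apply Finset.sum_eq_zero
    intro j _
    rw [if_neg]
    intro hcon
    apply hex
    rcases Nat.le_total N j with hle | hle
    · refine ⟨j - N, ?_⟩
      rw [hcon]
      congr 1
      unfold trid
      have : msq j N = (j-N)^2 := by
        have hj : j = N + (j - N) := by omega
        conv_lhs => rw [hj]
        exact msq_add N (j - N)
      omega
    · rcases Nat.eq_zero_or_pos (N - j) with h0 | hpos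
      · refine ⟨0, ?_⟩
        rw [hcon]
        congr 1
        unfold trid
        have hj : j = N := by omega
        subst hj
        have : msq j j = 0 := by
          have := msq_add j 0
          simpa using this
        omega
      · refine ⟨N - j - 1, ?_⟩
        rw [hcon]
        congr 1
        have h1 : trid j N = (N-j)^2 + j - N := by
          unfold trid
          have : msq j N = (N-j)^2 := by
            have hj : j = N - (N - j) := by omega
            conv_lhs => rw [hj]
            exact msq_sub (by omega)
          omega
        rw [h1]
        have e : (N-j)^2 = (N-j-1)^2 + 2*(N-j-1) + 1 := by
          obtain ⟨u, hu⟩ : ∃ u, N - j = u + 1 := ⟨N - j - 1, by omega⟩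
          rw [hu]
          have : u + 1 - 1 = u := by omega
          rw [this]
          ring
        omega
  
end SumEval

section Limits

lemma natAbs_dist (j N : ℕ) : ((j:ℤ) - N).natAbs = (j - N) + (N - j) := by
  rcases Nat.le_total j N with h | h
  · have e : ((j:ℤ) - N) = -(((N - j : ℕ)):ℤ) := by
      have : ((N - j : ℕ) : ℤ) = (N:ℤ) - j := by omega
      rw [this]; ring
    rw [e, Int.natAbs_neg, Int.natAbs_natCast]
    omega
  · have e : ((j:ℤ) - N) = (((j - N : ℕ)):ℤ) := by omega
    rw [e, Int.natAbs_natCast]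
    omega

lemma msq_as_dist (j N : ℕ) : msq j N = ((j - N) + (N - j))^2 := by
  rw [msq_natAbs, natAbs_dist]

lemma jtp_LHS_const (s N : ℕ) (c : ℤ) (hc : c^2 = 1) :
    ∏ k ∈ range N, ((1 + (C (R := ℤ) c) * ((X:R)^s)^(2*k+1)) * ((C (R := ℤ) c) + ((X:R)^s)^(2*k+1)))
      = (C (R := ℤ) c)^N * (Pf c (2*s) s N)^2 := by
  have hCc : (C (R := ℤ) c) * (C (R := ℤ) c) = 1 := by
    rw [← map_mul, (show c * c = 1 by nlinarith), map_one]
  have hstep : ∀ k ∈ range N, (1 + (C (R := ℤ) c) * ((X:R)^s)^(2*k+1)) * ((C (R := ℤ) c) + ((X:R)^s)^(2*k+1))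
      = (C (R := ℤ) c) * (1 + (C (R := ℤ) c) * (X:R)^(2*s*k+s))^2 := by
    intro k _
    have e : ((X:R)^s)^(2*k+1) = (X:R)^(2*s*k+s) := by
      rw [← pow_mul]; congr 1; ring
    rw [e]
    linear_combination (-(X:R)^(2*s*k+s) - (C (R := ℤ) c) * ((X:R)^(2*s*k+s))^2) * hCc
  rw [Finset.prod_congr rfl hstep, Finset.prod_mul_distrib, Finset.prod_const,
    Finset.prod_pow, Finset.card_range]
  rfl

lemma Lsq {s : ℕ} (hs : 1 ≤ s) (c : ℤ) (hc : c^2 = 1) :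
    (Pinf c (2*s) s)^2 * Pinf (-1) (2*s) (2*s) = sqS s c := by
  apply eq_of_forall_cong
  intro M
  set N := 2*M+4 with hNdef
  have hj := jtp ((X:R)^s) (C (R := ℤ) c) N
  rw [jtp_LHS_const s N c hc] at hj
  have hsum : ∑ j ∈ range (2*N+1), qb (((X:R)^s)^2) (2*N) j * ((X:R)^s)^(msq j N) * (C (R := ℤ) c)^j
      = ∑ j ∈ range (2*N+1), qb ((X:R)^(2*s)) (2*N) j * ((X:R)^(s * msq j N) * (C (R := ℤ) (c^j))) := by
    apply Finset.sum_congr rfl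
    intro j _
    rw [← pow_mul, (show s*2 = 2*s by ring), ← pow_mul, ← map_pow]
    ring
  rw [hsum] at hj
  have step1 : cong M
      (∑ j ∈ range (2*N+1), qb ((X:R)^(2*s)) (2*N) j * ((X:R)^(s * msq j N) * (C (R := ℤ) (c^j))))
      (∑ j ∈ range (2*N+1), Winv s * ((X:R)^(s * msq j N) * (C (R := ℤ) (c^j)))) := by
    apply cong_sum
    intro j hjmem
    have hjle : j ≤ 2*N := by have := Finset.mem_range.1 hjmem; omega
    by_cases hcen : s * msq j N < M
    · set t := (j - N) + (N - j) with htdef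
      have hmsq : msq j N = t^2 := msq_as_dist j N
      have htM : t ≤ M := by
        rcases Nat.eq_zero_or_pos t with h0 | h1
        · omega
        · nlinarith
      have hb1 : M ≤ 2*s*(j+1) := by
        have h1 : M ≤ 2*(j+1) := by omega
        exact le_trans h1 (Nat.mul_le_mul_right (j+1) (by omega))
      have hb2 : M ≤ 2*s*(2*N - j + 1) := by
        have h1 : M ≤ 2*(2*N - j + 1) := by omega
        exact le_trans h1 (Nat.mul_le_mul_right (2*N - j + 1) (by omega))
      exact (qb_central hs hjle hb1 hb2).mul (cong.refl _)
    · have h0a : cong M (qb ((X:R)^(2*s)) (2*N) j * ((X:R)^(s * msq j N) * (C (R := ℤ) (c^j)))) 0 := by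
        unfold cong
        rw [sub_zero]
        exact Dvd.dvd.mul_left (Dvd.dvd.mul_right (pow_dvd_pow X (by omega)) _) _
      have h0b : cong M (Winv s * ((X:R)^(s * msq j N) * (C (R := ℤ) (c^j)))) 0 := by
        unfold cong
        rw [sub_zero]
        exact Dvd.dvd.mul_left (Dvd.dvd.mul_right (pow_dvd_pow X (by omega)) _) _
      exact h0a.trans h0b.symm
  have step2 : (∑ j ∈ range (2*N+1), Winv s * ((X:R)^(s * msq j N) * (C (R := ℤ) (c^j))))
      = Winv s * ∑ j ∈ range (2*N+1), (X:R)^(s * msq j N) * (C (R := ℤ) (c^j)) := by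
    rw [Finset.mul_sum]
  have step3 := sum_msq_eval hs c hc (M := M) (N := N) (by omega)
  have chain : cong M ((C (R := ℤ) c)^N * (Pf c (2*s) s N)^2) (Winv s * ((C (R := ℤ) (c^N)) * sqS s c)) :=
    (cong_of_eq hj).trans (step1.trans ((cong_of_eq step2).trans
      ((cong.refl (Winv s)).mul step3)))
  have hCN : (C (R := ℤ) c)^N * (C (R := ℤ) c)^N = 1 := by
    simp only [← map_pow, ← map_mul, ← pow_add]
    rw [(show c^(N+N) = (c^2)^N by rw [← pow_mul]; congr 1; omega), hc, one_pow, map_one]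
  have chain2 : cong M ((Pf c (2*s) s N)^2) (Winv s * sqS s c) := by
    have h := (cong.refl ((C (R := ℤ) c)^N)).mul chain
    have e1 : (C (R := ℤ) c)^N * ((C (R := ℤ) c)^N * (Pf c (2*s) s N)^2) = (Pf c (2*s) s N)^2 := by
      rw [← mul_assoc, hCN, one_mul]
    have e2 : (C (R := ℤ) c)^N * (Winv s * ((C (R := ℤ) (c^N)) * sqS s c)) = Winv s * sqS s c := by
      calc (C (R := ℤ) c)^N * (Winv s * ((C (R := ℤ) (c^N)) * sqS s c))
          = ((C (R := ℤ) c)^N * (C (R := ℤ) c)^N) * (Winv s * sqS s c) := by rw [← map_pow]; ring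
        _ = Winv s * sqS s c := by rw [hCN, one_mul]
    exact (cong_of_eq e1.symm).trans (h.trans (cong_of_eq e2))
  have hPP : cong M ((Pinf c (2*s) s)^2) ((Pf c (2*s) s N)^2) :=
    (Pinf_cong' (by omega) (by omega) (by nlinarith : M ≤ 2*s*N + s)).pow 2
  have h := (hPP.trans chain2).mul (cong.refl (Pinf (-1) (2*s) (2*s)))
  have e3 : (Winv s * sqS s c) * Pinf (-1) (2*s) (2*s) = sqS s c := by
    calc (Winv s * sqS s c) * Pinf (-1) (2*s) (2*s)
        = sqS s c * (Pinf (-1) (2*s) (2*s) * Winv s) := by ring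
      _ = sqS s c := by rw [WE s hs, mul_one]
  exact h.trans (cong_of_eq e3)

end Limits

section LimitTri

lemma jtp_LHS_tri (s N : ℕ) :
    ∏ k ∈ range (N+1), ((1 + (X:R)^s * ((X:R)^s)^(2*k+1)) * ((X:R)^s + ((X:R)^s)^(2*k+1)))
      = (C (R := ℤ) 2) * ((X:R)^(s*(N+1)) * (Pf 1 (2*s) (2*s) (N+1) * Pf 1 (2*s) (2*s) N)) := by
  have hfac : ∀ k ∈ range (N+1),
      (1 + (X:R)^s * ((X:R)^s)^(2*k+1)) * ((X:R)^s + ((X:R)^s)^(2*k+1))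
      = (1 + (C (R := ℤ) 1) * (X:R)^(2*s*k + 2*s)) * ((X:R)^s * (1 + (X:R)^(2*s*k))) := by
    intro k _
    have e1 : (X:R)^s * ((X:R)^s)^(2*k+1) = (X:R)^(2*s*k+2*s) := by
      rw [← pow_mul, ← pow_add]; congr 1; ring
    have e2 : ((X:R)^s)^(2*k+1) = (X:R)^s * (X:R)^(2*s*k) := by
      rw [← pow_mul, ← pow_add]; congr 1; ring
    rw [e1, e2]
    simp only [map_one]
    ring
  rw [Finset.prod_congr rfl hfac, Finset.prod_mul_distrib]
  have h1 : ∏ k ∈ range (N+1), (1 + (C (R := ℤ) 1) * (X:R)^(2*s*k+2*s)) = Pf 1 (2*s) (2*s) (N+1) := rfl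
  rw [h1, Finset.prod_mul_distrib, Finset.prod_const, Finset.card_range, ← pow_mul]
  have h2 : ∏ k ∈ range (N+1), (1 + (X:R)^(2*s*k)) = 2 * Pf 1 (2*s) (2*s) N := by
    rw [Finset.prod_range_succ']
    have h3 : ∏ k ∈ range N, (1 + (X:R)^(2*s*(k+1))) = Pf 1 (2*s) (2*s) N := by
      unfold Pf
      apply Finset.prod_congr rfl
      intro k _
      rw [(show 2*s*(k+1) = 2*s*k + 2*s by ring)]
      simp
    rw [h3]
    norm_num
    ring
  rw [h2]
  have hC2 : (C (R := ℤ) 2) = (2 : R) := by simp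
  rw [hC2]
  ring

lemma Ltri {s : ℕ} (hs : 1 ≤ s) :
    (Pinf 1 (2*s) (2*s))^2 * Pinf (-1) (2*s) (2*s) = triS s := by
  have h2ne : (2 : R) ≠ 0 := by
    intro h
    have h2 := congrArg (constantCoeff (R := ℤ)) h
    rw [map_ofNat, map_zero] at h2
    norm_num at h2
  apply mul_left_cancel₀ h2ne
  apply eq_of_forall_cong
  intro M
  set N := 2*M+4 with hNdef
  have hj := jtp ((X:R)^s) ((X:R)^s) (N+1)
  rw [jtp_LHS_tri s N] at hj
  -- rewrite summands
  have hsum : ∑ j ∈ range (2*(N+1)+1), qb (((X:R)^s)^2) (2*(N+1)) j * ((X:R)^s)^(msq j (N+1)) * ((X:R)^s)^j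
      = (X:R)^(s*(N+1)) * ∑ j ∈ range (2*(N+1)+1),
          qb ((X:R)^(2*s)) (2*(N+1)) j * (X:R)^(s * trid j (N+1)) := by
    rw [Finset.mul_sum]
    apply Finset.sum_congr rfl
    intro j _
    have hexp : s * msq j (N+1) + s * j = s*(N+1) + s * trid j (N+1) := by
      have hge := msq_j_ge j (N+1)
      have htr : msq j (N+1) + j = (N+1) + trid j (N+1) := by
        unfold trid; omega
      calc s * msq j (N+1) + s * j = s * (msq j (N+1) + j) := by ring
        _ = s * ((N+1) + trid j (N+1)) := by rw [htr]
        _ = s*(N+1) + s * trid j (N+1) := by ring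
    calc qb (((X:R)^s)^2) (2*(N+1)) j * ((X:R)^s)^(msq j (N+1)) * ((X:R)^s)^j
        = qb ((X:R)^(2*s)) (2*(N+1)) j * (X:R)^(s * msq j (N+1) + s * j) := by
          rw [← pow_mul, (show s*2 = 2*s by ring), ← pow_mul, ← pow_mul, mul_assoc, ← pow_add]
      _ = qb ((X:R)^(2*s)) (2*(N+1)) j * ((X:R)^(s*(N+1)) * (X:R)^(s * trid j (N+1))) := by
          rw [hexp, pow_add]
      _ = (X:R)^(s*(N+1)) * (qb ((X:R)^(2*s)) (2*(N+1)) j * (X:R)^(s * trid j (N+1))) := by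
          ring
  rw [hsum] at hj
  -- inner congruences mod X^M
  have inner1 : cong M
      (∑ j ∈ range (2*(N+1)+1), qb ((X:R)^(2*s)) (2*(N+1)) j * (X:R)^(s * trid j (N+1)))
      (∑ j ∈ range (2*(N+1)+1), Winv s * (X:R)^(s * trid j (N+1))) := by
    apply cong_sum
    intro j hjmem
    have hjle : j ≤ 2*(N+1) := by have := Finset.mem_range.1 hjmem; omega
    by_cases hcen : s * trid j (N+1) < M
    · obtain ⟨t, ht⟩ : ∃ t, t = (j - (N+1)) + ((N+1) - j) := ⟨_, rfl⟩
      have hmsq : msq j (N+1) = t^2 := by rw [msq_as_dist, ← ht]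
      have htr : trid j (N+1) + t = t^2 + (j - (N+1)) * 2 := by
        unfold trid
        rw [hmsq]
        have hsq : t ≤ t^2 := Nat.le_self_pow (by omega) t
        omega
      have htM : t ≤ M + 1 := by
        rcases Nat.lt_or_ge t 2 with h1 | h1
        · omega
        · have h3 : t + t ≤ t^2 := by nlinarith
          have h4 : t ≤ trid j (N+1) := by omega
          have h5 : trid j (N+1) ≤ s * trid j (N+1) := Nat.le_mul_of_pos_left _ (by omega)
          omega
      have hb1 : M ≤ 2*s*(j+1) := by
        have h1 : M ≤ 2*(j+1) := by omega
        exact le_trans h1 (Nat.mul_le_mul_right (j+1) (by omega))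
      have hb2 : M ≤ 2*s*(2*(N+1) - j + 1) := by
        have h1 : M ≤ 2*(2*(N+1) - j + 1) := by omega
        exact le_trans h1 (Nat.mul_le_mul_right (2*(N+1) - j + 1) (by omega))
      exact (qb_central hs hjle hb1 hb2).mul (cong.refl _)
    · have h0a : cong M (qb ((X:R)^(2*s)) (2*(N+1)) j * (X:R)^(s * trid j (N+1))) 0 := by
        unfold cong
        rw [sub_zero]
        exact Dvd.dvd.mul_left (pow_dvd_pow X (by omega)) _
      have h0b : cong M (Winv s * (X:R)^(s * trid j (N+1))) 0 := by
        unfold cong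
        rw [sub_zero]
        exact Dvd.dvd.mul_left (pow_dvd_pow X (by omega)) _
      exact h0a.trans h0b.symm
  have inner2 : (∑ j ∈ range (2*(N+1)+1), Winv s * (X:R)^(s * trid j (N+1)))
      = Winv s * ∑ j ∈ range (2*(N+1)+1), (X:R)^(s * trid j (N+1)) := by
    rw [Finset.mul_sum]
  have inner3 := sum_tri_eval hs (M := M) (N := N+1) (by omega)
  have innerAll : cong M
      (∑ j ∈ range (2*(N+1)+1), qb ((X:R)^(2*s)) (2*(N+1)) j * (X:R)^(s * trid j (N+1)))
      (Winv s * ((C (R := ℤ) 2) * triS s)) :=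
    inner1.trans ((cong_of_eq inner2).trans ((cong.refl (Winv s)).mul inner3))
  -- multiply by X^(s(N+1)) and use hj
  have big : cong (M + s*(N+1))
      ((C (R := ℤ) 2) * ((X:R)^(s*(N+1)) * (Pf 1 (2*s) (2*s) (N+1) * Pf 1 (2*s) (2*s) N)))
      ((X:R)^(s*(N+1)) * (Winv s * ((C (R := ℤ) 2) * triS s))) := by
    have h := cong_mul_Xpow (e := s*(N+1)) innerAll
    exact (cong_of_eq hj).trans h
  have big2 : cong (s*(N+1) + M)
      ((X:R)^(s*(N+1)) * ((C (R := ℤ) 2) * (Pf 1 (2*s) (2*s) (N+1) * Pf 1 (2*s) (2*s) N)))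
      ((X:R)^(s*(N+1)) * (Winv s * ((C (R := ℤ) 2) * triS s))) := by
    have e : (C (R := ℤ) 2) * ((X:R)^(s*(N+1)) * (Pf 1 (2*s) (2*s) (N+1) * Pf 1 (2*s) (2*s) N))
        = (X:R)^(s*(N+1)) * ((C (R := ℤ) 2) * (Pf 1 (2*s) (2*s) (N+1) * Pf 1 (2*s) (2*s) N)) := by ring
    have e2 : M + s*(N+1) = s*(N+1) + M := by omega
    rw [← e, ← e2]
    exact big
  have small : cong M ((C (R := ℤ) 2) * (Pf 1 (2*s) (2*s) (N+1) * Pf 1 (2*s) (2*s) N))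
      (Winv s * ((C (R := ℤ) 2) * triS s)) := by
    have := cancel_Xpow (M := M) (e := s*(N+1)) (by
      have e2 : M + s*(N+1) = s*(N+1) + M := by omega
      rw [e2]
      exact big2)
    exact this
  -- replace Pf by Pinf
  have hP1 : cong M (Pinf 1 (2*s) (2*s)) (Pf 1 (2*s) (2*s) (N+1)) :=
    Pinf_cong' (by omega) (by omega) (by nlinarith : M ≤ 2*s*(N+1) + 2*s)
  have hP2 : cong M (Pinf 1 (2*s) (2*s)) (Pf 1 (2*s) (2*s) N) :=
    Pinf_cong' (by omega) (by omega) (by nlinarith : M ≤ 2*s*N + 2*s)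
  have hPfin : cong M ((C (R := ℤ) 2) * ((Pinf 1 (2*s) (2*s))^2)) (Winv s * ((C (R := ℤ) 2) * triS s)) := by
    have h := (cong.refl (C (R := ℤ) 2)).mul (hP1.mul hP2)
    have e : (Pinf 1 (2*s) (2*s))^2 = Pinf 1 (2*s) (2*s) * Pinf 1 (2*s) (2*s) := sq _
    rw [← e] at h
    exact h.trans small
  -- multiply by E and finish
  have h := hPfin.mul (cong.refl (Pinf (-1) (2*s) (2*s)))
  have e3 : (Winv s * ((C (R := ℤ) 2) * triS s)) * Pinf (-1) (2*s) (2*s) = (C (R := ℤ) 2) * triS s := by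
    calc (Winv s * ((C (R := ℤ) 2) * triS s)) * Pinf (-1) (2*s) (2*s)
        = ((C (R := ℤ) 2) * triS s) * (Pinf (-1) (2*s) (2*s) * Winv s) := by ring
      _ = (C (R := ℤ) 2) * triS s := by rw [WE s hs, mul_one]
  have e4 : (C (R := ℤ) 2) * ((Pinf 1 (2*s) (2*s))^2) * Pinf (-1) (2*s) (2*s)
      = 2 * ((Pinf 1 (2*s) (2*s))^2 * Pinf (-1) (2*s) (2*s)) := by
    have hC2 : (C (R := ℤ) 2) = (2 : R) := by simp
    rw [hC2]; ring
  have e5 : (C (R := ℤ) 2) * triS s = 2 * triS s := by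
    have hC2 : (C (R := ℤ) 2) = (2 : R) := by simp
    rw [hC2]
  rw [← e4, ← e5]
  exact h.trans (cong_of_eq e3)

end LimitTri

section Telescope

lemma coeff_Xpow_mul (v n : ℕ) (f : R) :
    coeff (R := ℤ) n ((X:R)^v * f) = if v ≤ n then coeff (R := ℤ) (n - v) f else 0 := by
  rcases le_or_gt v n with h | h
  · rw [if_pos h]
    obtain ⟨d, rfl⟩ := Nat.exists_eq_add_of_le h
    rw [(show v + d - v = d by omega), (show v + d = d + v by omega),
      PowerSeries.coeff_X_pow_mul]
  · rw [if_neg (by omega)]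
    exact PowerSeries.X_pow_dvd_iff.1 (dvd_mul_right _ f) n h

lemma sqS_split {v : ℕ} (hv : 1 ≤ v) (c : ℤ) (hc : c^2 = 1) :
    sqS v c = sqS (4*v) 1 + (C (R := ℤ) (2*c)) * ((X:R)^v * triS (4*v)) := by
  ext n
  rw [map_add, PowerSeries.coeff_C_mul, coeff_Xpow_mul]
  by_cases hex : ∃ m : ℕ, n = v * m^2
  · obtain ⟨m, hm⟩ := hex
    rcases Nat.even_or_odd m with ⟨u, hu⟩ | ⟨u, hu⟩
    · -- m = 2u
      subst hu
      have hn4 : n = 4*v*u^2 := by rw [hm]; ring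
      rw [sqS_coeff_of hv c (u+u) n hm, sqS_coeff_of (by omega) 1 u n hn4]
      have htri0 : ∀ w ≤ n, v ≤ n → n - v ≠ 4*v*(w^2+w) := by
        intro w _ _ hcon
        have : n = v*(2*w+1)^2 := by
          have e : v*(2*w+1)^2 = 4*v*(w^2+w) + v := by ring
          omega
        have h2 : v*(u+u)^2 = v*(2*w+1)^2 := hm.symm.trans this
        have h3 : (u+u)^2 = (2*w+1)^2 := Nat.eq_of_mul_eq_mul_left (by omega) h2
        have h4 : u+u = 2*w+1 := Nat.pow_left_injective (by omega) h3
        omega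
      by_cases hvn : v ≤ n
      · rw [if_pos hvn, triS_coeff_zero (n - v) (fun w => by
          by_cases hw : w ≤ n
          · exact htri0 w hw hvn
          · intro hcon
            have h5 : w^2 + w ≤ 4*v*(w^2+w) := Nat.le_mul_of_pos_left _ (by omega)
            have h6 : w ≤ w^2 + w := by omega
            have h7 : w ≤ n - v := le_trans h6 (hcon ▸ h5)
            omega)]
        rcases Nat.eq_zero_or_pos u with rfl | hu1
        · simp
        · rw [if_neg (by omega), if_neg (by omega)]
          have : c^(u+u) = 1 := by
            have e : c^(u+u) = (c^2)^u := by rw [← pow_mul]; congr 1; omega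
            rw [e, hc, one_pow]
          rw [this]
          ring
      · -- n < v : then m = 0, n = 0... but v ≤ n unless u = 0
        have hu0 : u = 0 := by
          by_contra hu0
          have : v ≤ v*(u+u)^2 := Nat.le_mul_of_pos_right v (pow_pos (by omega) 2)
          omega
        subst hu0
        rw [if_neg hvn]
        simp
    · -- m = 2u+1
      subst hu
      have hvn : v ≤ n := by
        have : v ≤ v*(2*u+1)^2 := Nat.le_mul_of_pos_right v (pow_pos (by omega) 2)
        omega
      have hnv : n - v = 4*v*(u^2+u) := by
        have e : v*(2*u+1)^2 = 4*v*(u^2+u) + v := by ring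
        omega
      rw [sqS_coeff_of hv c (2*u+1) n hm, if_pos hvn, triS_coeff_of (by omega) u _ hnv]
      rw [sqS_coeff_zero 1 n (fun w => by
        intro hcon
        have h2 : v*(2*u+1)^2 = v*(2*w)^2 := by
          rw [← hm, hcon]; ring
        have h3 : (2*u+1)^2 = (2*w)^2 := Nat.eq_of_mul_eq_mul_left (by omega) h2
        have h4 : 2*u+1 = 2*w := Nat.pow_left_injective (by omega) h3
        omega)]
      rw [if_neg (by omega)]
      have : c^(2*u+1) = c := by
        have e : c^(2*u+1) = (c^2)^u * c := by rw [← pow_mul, ← pow_succ]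
        rw [e, hc, one_pow, one_mul]
      rw [this]
      ring
  · -- no representation
    rw [sqS_coeff_zero c n (by push_neg at hex; exact hex)]
    rw [sqS_coeff_zero 1 n (fun w => by
      intro hcon
      exact hex ⟨2*w, by rw [hcon]; ring⟩)]
    by_cases hvn : v ≤ n
    · rw [if_pos hvn, triS_coeff_zero (n-v) (fun w => by
        intro hcon
        refine hex ⟨2*w+1, ?_⟩
        have e : v*(2*w+1)^2 = 4*v*(w^2+w) + v := by ring
        omega)]
      ring
    · rw [if_neg hvn]
      ring

lemma mult_fact {s : ℕ} (hs : 1 ≤ s) :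
    (triS (2*s))^2 = sqS (4*s) 1 * triS (4*s) := by
  have h1 := Ltri (s := 2*s) (by omega)
  have h2 := Lsq (s := 4*s) (by omega) 1 (by norm_num)
  have h3 := Ltri (s := 4*s) (by omega)
  rw [(show 2*(2*s) = 4*s by ring)] at h1
  rw [(show 2*(4*s) = 8*s by ring)] at h2 h3
  have hsplit := Pinf_split 1 (d := 4*s) (r := 4*s) (by omega) (by omega)
  rw [(show 2*(4*s) = 8*s by ring), (show 4*s+4*s = 8*s by ring)] at hsplit
  have hpair := Pinf_pair (d := 4*s) (r := 4*s) (by omega) (by omega)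
  rw [(show 2*(4*s) = 8*s by ring)] at hpair
  rw [hsplit] at hpair
  rw [← h1, ← h2, ← h3, hsplit]
  linear_combination (Pinf 1 (8*s) (4*s)^2 * Pinf 1 (8*s) (8*s)^2 *
    (Pinf 1 (8*s) (4*s) * Pinf 1 (8*s) (8*s) * Pinf (-1) (4*s) (4*s) + Pinf (-1) (8*s) (8*s))) * hpair

/-- the telescoping difference -/
def Dlt (v : ℕ) : R :=
  (sqS v 1)^2 - (sqS (2*v) 1)^2 - 4 * ((X:R)^v * (triS (2*v))^2)

lemma C2c_one : (C (R := ℤ) (2*1)) = (2 : R) := by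
  norm_num

lemma Dlt_step {v : ℕ} (hv : 1 ≤ v) : Dlt v = - Dlt (2*v) := by
  have hsp := sqS_split hv 1 (by norm_num)
  rw [C2c_one] at hsp
  have hmf := mult_fact (s := v) hv
  unfold Dlt
  rw [(show 2*(2*v) = 4*v by ring), hsp]
  have e1 : (X:R)^(2*v) = (X:R)^v * (X:R)^v := by rw [← pow_add]; congr 1; omega
  rw [e1]
  linear_combination (-(4*(X:R)^v)) * hmf

lemma sqS_cong_one {v : ℕ} (hv : 1 ≤ v) (c : ℤ) : cong v (sqS v c) 1 := by
  apply cong_of_coeff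
  intro n hn
  by_cases hex : ∃ m : ℕ, n = v * m^2
  · obtain ⟨m, hm⟩ := hex
    have hm0 : m = 0 := by
      by_contra h
      have : v ≤ v * m^2 := Nat.le_mul_of_pos_right v (pow_pos (by omega) 2)
      omega
    subst hm0
    have hn0 : n = 0 := by omega
    subst hn0
    rw [sqS_coeff_of hv c 0 0 (by omega)]
    simp
  · rw [sqS_coeff_zero c n (by push_neg at hex; exact hex)]
    have hn0 : n ≠ 0 := by
      intro h
      exact hex ⟨0, by omega⟩
    rw [PowerSeries.coeff_one, if_neg hn0]

lemma Dlt_cong_zero {v : ℕ} (hv : 1 ≤ v) : cong v (Dlt v) 0 := by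
  unfold Dlt
  have h1 := sqS_cong_one hv 1
  have h2 : cong v (sqS (2*v) 1) 1 := by
    have h := sqS_cong_one (v := 2*v) (by omega) 1
    unfold cong at h ⊢
    exact dvd_trans (pow_dvd_pow X (by omega)) h
  have h3 : cong v (4 * ((X:R)^v * (triS (2*v))^2)) 0 := by
    unfold cong
    rw [sub_zero]
    exact Dvd.dvd.mul_left (Dvd.dvd.mul_right (pow_dvd_pow X le_rfl) _) 4
  have h4 := ((h1.pow 2).sub (h2.pow 2)).sub h3
  simpa using h4

lemma Dlt_zero {v : ℕ} (hv : 1 ≤ v) : Dlt v = 0 := by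
  ext n
  rw [map_zero]
  have key : ∀ j : ℕ, ∀ v n : ℕ, 1 ≤ v → n < 2^j * v → coeff (R := ℤ) n (Dlt v) = 0 := by
    intro j
    induction j with
    | zero =>
        intro v n hv hn
        rw [pow_zero, one_mul] at hn
        have := cong_coeff (Dlt_cong_zero hv) hn
        simpa using this
    | succ j ih =>
        intro v n hv hn
        rcases Nat.lt_or_ge n v with h | h
        · have := cong_coeff (Dlt_cong_zero hv) h
          simpa using this
        · rw [Dlt_step hv, map_neg, ih (2*v) n (by omega) (by
            have e : 2^(j+1) * v = 2^j * (2*v) := by ring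
            omega), neg_zero]
  apply key (n+1) v n hv
  have h1 : n < 2^n := Nat.lt_two_pow_self
  have h3 : 2^n ≤ 2^(n+1) := Nat.pow_le_pow_right (by omega) (by omega)
  have h4 : 2^(n+1) ≤ 2^(n+1)*v := Nat.le_mul_of_pos_right _ (by omega)
  omega

lemma J1 : (sqS 1 (-1))^2 + 4 * X * (triS 2)^2 = (sqS 2 1)^2 := by
  have hsp := sqS_split (v := 1) (by omega) (-1) (by norm_num)
  have hC : (C (R := ℤ) (2*(-1))) = (-2 : R) := by norm_num
  rw [hC] at hsp
  have hmf := mult_fact (s := 1) (by omega)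
  have hD := Dlt_zero (v := 2) (by omega)
  unfold Dlt at hD
  rw [(show 2*2 = 4 by ring)] at hD
  rw [(show 4*1 = 4 by ring)] at hsp hmf
  rw [(show 2*1 = 2 by ring)] at hmf
  rw [hsp]
  have e1 : (X:R)^2 = X * X := by rw [pow_two]
  have e2 : (X:R)^1 = X := pow_one X
  rw [e2] at hsp ⊢
  rw [e1] at hD
  linear_combination (4*(X:R)) * hmf - hD
end Telescope

section MainId

lemma MainId :
    (Pinf (-1) 1 1)^4 * ((Pinf (-1) 2 2)^2 * ((Pinf (-1) 4 4)^2 * (Pinf (-1) 8 8)^4))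
      + 4*X*((Pinf (-1) 2 2)^4 * (Pinf (-1) 8 8)^8) = (Pinf (-1) 4 4)^12 := by
  have hA1 := Lsq (s := 1) le_rfl (-1) (by norm_num)
  rw [(show 2*1 = 2 by norm_num)] at hA1
  have hM1 := Pinf_split (-1) (d := 1) (r := 1) le_rfl le_rfl
  rw [(show 2*1 = 2 by norm_num), (show 1+1 = 2 by norm_num)] at hM1
  have hA2 := Lsq (s := 2) (by omega) 1 (by norm_num)
  rw [(show 2*2 = 4 by norm_num)] at hA2
  have hM2a := Pinf_split (-1) (d := 2) (r := 2) (by omega) (by omega)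
  rw [(show 2*2 = 4 by norm_num), (show 2+2 = 4 by norm_num)] at hM2a
  have hM2b := Pinf_pair (d := 4) (r := 2) (by omega) (by omega)
  rw [(show 2*4 = 8 by norm_num), (show 2*2 = 4 by norm_num)] at hM2b
  have hM2c := Pinf_split (-1) (d := 4) (r := 4) (by omega) (by omega)
  rw [(show 2*4 = 8 by norm_num), (show 4+4 = 8 by norm_num)] at hM2c
  have hPsi := Ltri (s := 2) (by omega)
  rw [(show 2*2 = 4 by norm_num)] at hPsi
  have hM3 := Pinf_pair (d := 4) (r := 4) (by omega) (by omega)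
  rw [(show 2*4 = 8 by norm_num)] at hM3
  have h_e1 : (Pinf (-1) 1 1)^4 = (Pinf (-1) 2 2)^2 * (sqS 1 (-1))^2 := by
    rw [hM1]
    linear_combination ((Pinf (-1) 2 2)^2 * ((Pinf (-1) 2 1)^2 * Pinf (-1) 2 2 + sqS 1 (-1))) * hA1
  have h_e8sq : (Pinf (-1) 8 8)^4 = (triS 2)^2 * (Pinf (-1) 4 4)^2 := by
    rw [← hM3]
    linear_combination ((Pinf (-1) 4 4)^2 * ((Pinf 1 4 4)^2 * Pinf (-1) 4 4 + triS 2)) * hPsi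
  have h_b : sqS 2 1 * ((Pinf (-1) 2 2)^2 * (Pinf (-1) 8 8)^2) = (Pinf (-1) 4 4)^5 := by
    rw [← hA2, hM2a]
    linear_combination ((Pinf (-1) 4 4)^3 * (Pinf (-1) 8 8)^2 * (Pinf (-1) 4 2 * Pinf 1 4 2 + Pinf (-1) 8 4)) * hM2b
      - ((Pinf (-1) 4 4)^3 * (Pinf (-1) 8 4 * Pinf (-1) 8 8 + Pinf (-1) 4 4)) * hM2c
  have k0 : (Pinf (-1) 8 8)^8 = ((triS 2)^2 * (Pinf (-1) 4 4)^2)^2 := by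
    rw [(show (Pinf (-1) 8 8)^8 = ((Pinf (-1) 8 8)^4)^2 by ring), h_e8sq]
  have h_b1 : (sqS 2 1)^2 * ((Pinf (-1) 2 2)^4 * (Pinf (-1) 8 8)^4) = (Pinf (-1) 4 4)^10 := by
    linear_combination (sqS 2 1 * ((Pinf (-1) 2 2)^2 * (Pinf (-1) 8 8)^2) + (Pinf (-1) 4 4)^5) * h_b
  rw [h_e8sq] at h_b1
  rw [h_e1, h_e8sq, k0]
  linear_combination ((Pinf (-1) 2 2)^4 * (Pinf (-1) 4 4)^4 * (triS 2)^2) * J1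
    + ((Pinf (-1) 4 4)^2) * h_b1

end MainId

lemma D4_exact (D4 : ℕ → ℤ)
    (hD4 : ∀ n : ℕ,
      PowerSeries.coeff (R := ℤ) n
          (PowerSeries.mk D4 *
            (∏ k ∈ Finset.range (n + 1), (1 - PowerSeries.X ^ (2 * (k + 1)))) *
            (∏ k ∈ Finset.range (n + 1), (1 - PowerSeries.X ^ (4 * (k + 1))))) =
        PowerSeries.coeff (R := ℤ) n
          (∏ k ∈ Finset.range (n + 1), (1 - PowerSeries.X ^ (k + 1)) ^ 4)) :
    PowerSeries.mk D4 * Pinf (-1) 2 2 * Pinf (-1) 4 4 = (Pinf (-1) 1 1)^4 := by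
  ext m
  have h2 := Pinf_cong (c := -1) (d := 2) (r := 2) (by omega) (by omega) (le_refl (m+1))
  have h4 := Pinf_cong (c := -1) (d := 4) (r := 4) (by omega) (by omega) (le_refl (m+1))
  have h1 := Pinf_cong (c := -1) (d := 1) (r := 1) (by omega) (by omega) (le_refl (m+1))
  have hc : cong (m+1) (PowerSeries.mk D4 * Pinf (-1) 2 2 * Pinf (-1) 4 4)
      (PowerSeries.mk D4 * Pf (-1) 2 2 (m+1) * Pf (-1) 4 4 (m+1)) :=
    ((cong.refl _).mul h2).mul h4
  rw [cong_coeff hc (Nat.lt_succ_self m)]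
  rw [Pf_neg_eq, Pf_neg_eq, hD4 m]
  have e : (∏ k ∈ range (m+1), ((1:R) - X^(1*(k+1)))^4) = (Pf (-1) 1 1 (m+1))^4 := by
    rw [Finset.prod_pow, Pf_neg_eq]
  have e2 : (∏ k ∈ range (m+1), ((1:R) - X^(k+1))^4)
      = (∏ k ∈ range (m+1), ((1:R) - X^(1*(k+1)))^4) := by
    apply Finset.prod_congr rfl
    intro k _
    rw [one_mul]
  rw [e2, e]
  exact (cong_coeff (h1.pow 4) (Nat.lt_succ_self m)).symm

theorem bicrank_main
    (D4 : ℕ → ℤ)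
    (hD4 : ∀ n : ℕ,
      PowerSeries.coeff (R := ℤ) n
          (PowerSeries.mk D4 *
            (∏ k ∈ Finset.range (n + 1), (1 - PowerSeries.X ^ (2 * (k + 1)))) *
            (∏ k ∈ Finset.range (n + 1), (1 - PowerSeries.X ^ (4 * (k + 1))))) =
        PowerSeries.coeff (R := ℤ) n
          (∏ k ∈ Finset.range (n + 1), (1 - PowerSeries.X ^ (k + 1)) ^ 4)) :
    ∀ n : ℕ,
      PowerSeries.coeff (R := ℤ) n
          (PowerSeries.mk D4 *
            ((∏ k ∈ Finset.range (n + 1), (1 - PowerSeries.X ^ (2 * (k + 1)))) ^ 3 *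
              (∏ k ∈ Finset.range (n + 1), (1 - PowerSeries.X ^ (8 * (k + 1)))) ^ 4 *
              (∏ k ∈ Finset.range (n + 1), (1 - PowerSeries.X ^ (4 * (k + 1)))) ^ 3)) =
        PowerSeries.coeff (R := ℤ) n
          ((∏ k ∈ Finset.range (n + 1), (1 - PowerSeries.X ^ (4 * (k + 1)))) ^ 9 *
              (∏ k ∈ Finset.range (n + 1), (1 - PowerSeries.X ^ (4 * (k + 1)))) ^ 3 -
            4 * PowerSeries.X *
              ((∏ k ∈ Finset.range (n + 1), (1 - PowerSeries.X ^ (2 * (k + 1)))) *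
                (∏ k ∈ Finset.range (n + 1), (1 - PowerSeries.X ^ (8 * (k + 1)))) ^ 4) *
              ((∏ k ∈ Finset.range (n + 1), (1 - PowerSeries.X ^ (2 * (k + 1)))) ^ 3 *
                (∏ k ∈ Finset.range (n + 1), (1 - PowerSeries.X ^ (8 * (k + 1)))) ^ 4)) := by
  intro n
  have hP := D4_exact D4 hD4
  have hKey : PowerSeries.mk D4 * ((Pinf (-1) 2 2)^3 * (Pinf (-1) 8 8)^4 * (Pinf (-1) 4 4)^3)
      = (Pinf (-1) 4 4)^9 * (Pinf (-1) 4 4)^3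
        - 4*X*((Pinf (-1) 2 2)*(Pinf (-1) 8 8)^4)*((Pinf (-1) 2 2)^3*(Pinf (-1) 8 8)^4) := by
    have e1 : PowerSeries.mk D4 * ((Pinf (-1) 2 2)^3 * (Pinf (-1) 8 8)^4 * (Pinf (-1) 4 4)^3)
        = (PowerSeries.mk D4 * Pinf (-1) 2 2 * Pinf (-1) 4 4)
          * ((Pinf (-1) 2 2)^2 * ((Pinf (-1) 4 4)^2 * (Pinf (-1) 8 8)^4)) := by ring
    rw [e1, hP]
    linear_combination MainId
  have h2 := Pinf_cong (c := -1) (d := 2) (r := 2) (by omega) (by omega) (le_refl (n+1))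
  have h4 := Pinf_cong (c := -1) (d := 4) (r := 4) (by omega) (by omega) (le_refl (n+1))
  have h8 := Pinf_cong (c := -1) (d := 8) (r := 8) (by omega) (by omega) (le_refl (n+1))
  rw [← Pf_neg_eq 2 (n+1), ← Pf_neg_eq 4 (n+1), ← Pf_neg_eq 8 (n+1)]
  have CL : cong (n+1)
      (PowerSeries.mk D4 * ((Pinf (-1) 2 2)^3 * (Pinf (-1) 8 8)^4 * (Pinf (-1) 4 4)^3))
      (PowerSeries.mk D4 * ((Pf (-1) 2 2 (n+1))^3 * (Pf (-1) 8 8 (n+1))^4 * (Pf (-1) 4 4 (n+1))^3)) :=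
    (cong.refl _).mul (((h2.pow 3).mul (h8.pow 4)).mul (h4.pow 3))
  have CR : cong (n+1)
      ((Pinf (-1) 4 4)^9 * (Pinf (-1) 4 4)^3
        - 4*X*((Pinf (-1) 2 2)*(Pinf (-1) 8 8)^4)*((Pinf (-1) 2 2)^3*(Pinf (-1) 8 8)^4))
      ((Pf (-1) 4 4 (n+1))^9 * (Pf (-1) 4 4 (n+1))^3
        - 4*X*((Pf (-1) 2 2 (n+1))*(Pf (-1) 8 8 (n+1))^4)*((Pf (-1) 2 2 (n+1))^3*(Pf (-1) 8 8 (n+1))^4)) :=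
    ((h4.pow 9).mul (h4.pow 3)).sub
      ((((cong.refl (4*X)).mul (h2.mul (h8.pow 4))).mul ((h2.pow 3).mul (h8.pow 4))))
  calc PowerSeries.coeff (R := ℤ) n
        (PowerSeries.mk D4 * ((Pf (-1) 2 2 (n+1))^3 * (Pf (-1) 8 8 (n+1))^4 * (Pf (-1) 4 4 (n+1))^3))
      = PowerSeries.coeff (R := ℤ) n
        (PowerSeries.mk D4 * ((Pinf (-1) 2 2)^3 * (Pinf (-1) 8 8)^4 * (Pinf (-1) 4 4)^3)) :=
        (cong_coeff CL (Nat.lt_succ_self n)).symm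
    _ = PowerSeries.coeff (R := ℤ) n
        ((Pinf (-1) 4 4)^9 * (Pinf (-1) 4 4)^3
          - 4*X*((Pinf (-1) 2 2)*(Pinf (-1) 8 8)^4)*((Pinf (-1) 2 2)^3*(Pinf (-1) 8 8)^4)) := by
        rw [hKey]
    _ = PowerSeries.coeff (R := ℤ) n
        ((Pf (-1) 4 4 (n+1))^9 * (Pf (-1) 4 4 (n+1))^3
          - 4*X*((Pf (-1) 2 2 (n+1))*(Pf (-1) 8 8 (n+1))^4)*((Pf (-1) 2 2 (n+1))^3*(Pf (-1) 8 8 (n+1))^4)) :=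
        cong_coeff CR (Nat.lt_succ_self n)

end

end BicrankAux

/-- with `D4` defined by
`∑ D4(n) qⁿ = ∏(1−q^k)⁴ / (∏(1−q^{2k})·∏(1−q^{4k}))` (coefficientwise, denominator
cleared), one has, as formal power series,
`∑ D4(n) qⁿ = ∏(1−q^{4n})⁹ / (∏(1−q^{2n})³ ∏(1−q^{8n})⁴)
             − 4q ∏(1−q^{2n}) ∏(1−q^{8n})⁴ / ∏(1−q^{4n})³`,
stated coefficientwise after clearing the (common) denominator
`∏(1−q^{2n})³ ∏(1−q^{8n})⁴ ∏(1−q^{4n})³`, with all infinite products truncated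
harmlessly (factors with exponent `> n` do not affect the coefficient of `qⁿ`). -/
theorem bicrank_mod_four_two_dissection
    (D4 : ℕ → ℤ)
    (hD4 : ∀ n : ℕ,
      PowerSeries.coeff (R := ℤ) n
          (PowerSeries.mk D4 *
            (∏ k ∈ Finset.range (n + 1), (1 - PowerSeries.X ^ (2 * (k + 1)))) *
            (∏ k ∈ Finset.range (n + 1), (1 - PowerSeries.X ^ (4 * (k + 1))))) =
        PowerSeries.coeff (R := ℤ) n
          (∏ k ∈ Finset.range (n + 1), (1 - PowerSeries.X ^ (k + 1)) ^ 4)) :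
    ∀ n : ℕ,
      PowerSeries.coeff (R := ℤ) n
          (PowerSeries.mk D4 *
            ((∏ k ∈ Finset.range (n + 1), (1 - PowerSeries.X ^ (2 * (k + 1)))) ^ 3 *
              (∏ k ∈ Finset.range (n + 1), (1 - PowerSeries.X ^ (8 * (k + 1)))) ^ 4 *
              (∏ k ∈ Finset.range (n + 1), (1 - PowerSeries.X ^ (4 * (k + 1)))) ^ 3)) =
        PowerSeries.coeff (R := ℤ) n
          ((∏ k ∈ Finset.range (n + 1), (1 - PowerSeries.X ^ (4 * (k + 1)))) ^ 9 *
              (∏ k ∈ Finset.range (n + 1), (1 - PowerSeries.X ^ (4 * (k + 1)))) ^ 3 -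
            4 * PowerSeries.X *
              ((∏ k ∈ Finset.range (n + 1), (1 - PowerSeries.X ^ (2 * (k + 1)))) *
                (∏ k ∈ Finset.range (n + 1), (1 - PowerSeries.X ^ (8 * (k + 1)))) ^ 4) *
              ((∏ k ∈ Finset.range (n + 1), (1 - PowerSeries.X ^ (2 * (k + 1)))) ^ 3 *
                (∏ k ∈ Finset.range (n + 1), (1 - PowerSeries.X ^ (8 * (k + 1)))) ^ 4)) :=
  BicrankAux.bicrank_main D4 hD4
end

section
/- Every coefficient of the formal power series ∏_{n≥1}(1−q^{4n})^4 / ( ∏_{n≥1}(1−q^n) · ∏_{n≥1}(1−q^{2n}) ) over ℤ is positive; that is, if g(n) is defined by ∑_{n≥0} g(n) q^n = ∏_{n≥1}(1−q^{4n})^4 / ( ∏_{n≥1}(1−q^n) · ∏_{n≥1}(1−q^{2n}) ), then g(n) ≥ 1 for all n ≥ 0. -/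
open PowerSeries Finset

set_option maxHeartbeats 1000000

namespace Stmt18

noncomputable abbrev XX : PowerSeries ℤ := PowerSeries.X

/-- Congruence modulo `X^t`. -/
def MD (t : ℕ) (f g : PowerSeries ℤ) : Prop := XX ^ t ∣ f - g

lemma MD.refl (t : ℕ) (f : PowerSeries ℤ) : MD t f f := by simp [MD]

lemma MD.symm {t : ℕ} {f g : PowerSeries ℤ} (h : MD t f g) : MD t g f := by
  have : g - f = -(f - g) := by ring
  rw [MD, this]
  exact dvd_neg.mpr h

lemma MD.trans {t : ℕ} {f g h : PowerSeries ℤ} (h1 : MD t f g) (h2 : MD t g h) : MD t f h := by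
  have : f - h = (f - g) + (g - h) := by ring
  rw [MD, this]
  exact dvd_add h1 h2

lemma MD.add {t : ℕ} {f g f' g' : PowerSeries ℤ} (h1 : MD t f g) (h2 : MD t f' g') :
    MD t (f + f') (g + g') := by
  have : f + f' - (g + g') = (f - g) + (f' - g') := by ring
  rw [MD, this]
  exact dvd_add h1 h2

lemma MD.mul {t : ℕ} {f g f' g' : PowerSeries ℤ} (h1 : MD t f g) (h2 : MD t f' g') :
    MD t (f * f') (g * g') := by
  have : f * f' - g * g' = f * (f' - g') + (f - g) * g' := by ring
  rw [MD, this]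
  exact dvd_add (Dvd.dvd.mul_left h2 f) (Dvd.dvd.mul_right h1 g')

lemma MD.pow {t : ℕ} {f g : PowerSeries ℤ} (h : MD t f g) (k : ℕ) : MD t (f ^ k) (g ^ k) := by
  induction k with
  | zero => simpa using MD.refl t 1
  | succ k ih => rw [pow_succ, pow_succ]; exact ih.mul h

lemma MD.prod {t : ℕ} {s : Finset ℕ} {f g : ℕ → PowerSeries ℤ}
    (h : ∀ i ∈ s, MD t (f i) (g i)) : MD t (∏ i ∈ s, f i) (∏ i ∈ s, g i) := by
  classical
  induction s using Finset.induction_on with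
  | empty => simpa using MD.refl t 1
  | @insert a s' ha ih =>
    rw [Finset.prod_insert ha, Finset.prod_insert ha]
    exact (h a (Finset.mem_insert_self a s')).mul
      (ih fun i hi => h i (Finset.mem_insert_of_mem hi))

lemma MD.sum {t : ℕ} {s : Finset ℕ} {f g : ℕ → PowerSeries ℤ}
    (h : ∀ i ∈ s, MD t (f i) (g i)) : MD t (∑ i ∈ s, f i) (∑ i ∈ s, g i) := by
  classical
  induction s using Finset.induction_on with
  | empty => simpa using MD.refl t 0
  | @insert a s' ha ih =>
    rw [Finset.sum_insert ha, Finset.sum_insert ha]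
    exact (h a (Finset.mem_insert_self a s')).add
      (ih fun i hi => h i (Finset.mem_insert_of_mem hi))

lemma MD_X_pow {t e : ℕ} (h : t ≤ e) : MD t (XX ^ e) 0 := by
  simpa [MD] using pow_dvd_pow XX h

lemma MD.of_le {t t' : ℕ} {f g : PowerSeries ℤ} (h : MD t f g) (h' : t' ≤ t) : MD t' f g :=
  dvd_trans (pow_dvd_pow XX h') h

lemma MD.coeff_eq {t : ℕ} {f g : PowerSeries ℤ} (h : MD t f g) {m : ℕ} (hm : m < t) :
    PowerSeries.coeff (R := ℤ) m f = PowerSeries.coeff (R := ℤ) m g := by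
  have := (PowerSeries.X_pow_dvd_iff.mp h) m hm
  rw [map_sub] at this
  linarith

lemma MD_cancel_X_pow {t n : ℕ} {f g : PowerSeries ℤ}
    (h : MD (n + t) (XX ^ n * f) (XX ^ n * g)) : MD t f g := by
  rw [MD] at h ⊢
  obtain ⟨c, hc⟩ := h
  rw [show XX ^ n * f - XX ^ n * g = XX ^ n * (f - g) by ring, pow_add] at hc
  refine ⟨c, ?_⟩
  have hX : (XX : PowerSeries ℤ) ^ n ≠ 0 := pow_ne_zero _ PowerSeries.X_ne_zero
  apply mul_left_cancel₀ hX
  rw [hc]; ring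

lemma MD_cancel_two {t : ℕ} {f g : PowerSeries ℤ}
    (h : MD t (2 * f) (2 * g)) : MD t f g := by
  rw [MD] at h ⊢
  rw [PowerSeries.X_pow_dvd_iff] at h ⊢
  intro m hm
  have h0 := h m hm
  rw [map_sub] at h0
  rw [map_sub]
  have h2 : (PowerSeries.coeff (R := ℤ) m) (2*f) = 2 * PowerSeries.coeff (R := ℤ) m f := by
    rw [show (2 : PowerSeries ℤ) * f = (2:ℤ) • f by simp [smul_eq_C_mul], map_smul]
    simp
  have h3 : (PowerSeries.coeff (R := ℤ) m) (2*g) = 2 * PowerSeries.coeff (R := ℤ) m g := by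
    rw [show (2 : PowerSeries ℤ) * g = (2:ℤ) • g by simp [smul_eq_C_mul], map_smul]
    simp
  rw [h2, h3] at h0
  omega


/-- Gaussian binomial `[m, k]` in the variable `X^2`, defined by the Pascal recursion. -/
noncomputable def B : ℕ → ℕ → PowerSeries ℤ
  | 0, 0 => 1
  | 0, _+1 => 0
  | m+1, 0 => B m 0
  | m+1, k+1 => B m (k+1) + XX ^ (2*(m - k)) * B m k

lemma B_zero_right (m : ℕ) : B m 0 = 1 := by
  induction m with
  | zero => rfl
  | succ m ih => rw [B, ih]

lemma B_succ_succ (m k : ℕ) : B (m+1) (k+1) = B m (k+1) + XX ^ (2*(m - k)) * B m k := by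
  rw [B]

lemma B_eq_zero {m k : ℕ} (h : m < k) : B m k = 0 := by
  induction m generalizing k with
  | zero => match k, h with
    | k+1, _ => rfl
  | succ m ih =>
    match k, h with
    | k+1, h =>
      rw [B, ih (by omega), ih (by omega), mul_zero, add_zero]

lemma B_pascal2 (m k : ℕ) : B (m+1) (k+1) = XX ^ (2*(k+1)) * B m (k+1) + B m k := by
  induction m generalizing k with
  | zero =>
    match k with
    | 0 => simp [B, B_zero_right]
    | k+1 => simp [B, B_eq_zero (by omega : (0:ℕ) < k+1), B_eq_zero (by omega : (0:ℕ) < k+2)]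
  | succ m ih =>
    match k with
    | 0 =>
      have ih0 : B (m+1) 1 = XX ^ 2 * B m 1 + 1 := by
        have := ih 0
        rw [B_zero_right] at this
        norm_num at this ⊢
        exact this
      have hdef : B (m+2) 1 = B (m+1) 1 + XX ^ (2*(m+1)) := by
        rw [B_succ_succ (m+1) 0, B_zero_right, Nat.sub_zero, mul_one]
      have hdef2 : B (m+1) 1 = B m 1 + XX ^ (2*m) := by
        rw [B_succ_succ m 0, B_zero_right, Nat.sub_zero, mul_one]
      rw [hdef]
      conv_lhs => rw [ih0]
      conv_rhs => rw [hdef2, B_zero_right]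
      norm_num
      ring
    | k'+1 =>
      rcases le_or_gt (k'+1) m with hkm | hkm
      · obtain ⟨d, rfl⟩ : ∃ d, m = k'+1+d := ⟨m - (k'+1), by omega⟩
        have hL : B (k'+1+d+2) (k'+2) = B (k'+1+d+1) (k'+2) + XX ^ (2*(d+1)) * B (k'+1+d+1) (k'+1) := by
          rw [B_succ_succ (k'+1+d+1) (k'+1), show k'+1+d+1 - (k'+1) = d+1 from by omega]
        have ihA : B (k'+1+d+1) (k'+2) = XX ^ (2*(k'+2)) * B (k'+1+d) (k'+2) + B (k'+1+d) (k'+1) := by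
          simpa [show k'+1+1 = k'+2 from rfl] using ih (k'+1)
        have ihB : B (k'+1+d+1) (k'+1) = XX ^ (2*(k'+1)) * B (k'+1+d) (k'+1) + B (k'+1+d) k' := by
          exact ih k'
        have dA : B (k'+1+d+1) (k'+2) = B (k'+1+d) (k'+2) + XX ^ (2*d) * B (k'+1+d) (k'+1) := by
          rw [B_succ_succ (k'+1+d) (k'+1), show k'+1+d - (k'+1) = d from by omega]
        have dB : B (k'+1+d+1) (k'+1) = B (k'+1+d) (k'+1) + XX ^ (2*(d+1)) * B (k'+1+d) k' := by
          rw [B_succ_succ (k'+1+d) k', show k'+1+d - k' = d+1 from by omega]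
        rw [hL]
        conv_lhs => rw [ihA, ihB]
        conv_rhs => rw [dA, dB]
        ring
      · -- k' ≥ m+1 : high indices vanish
        rcases le_or_gt (k'+1) (m+1) with h3 | h3
        · -- k' = m
          rw [B_succ_succ (m+1) (k'+1), B_eq_zero (show m+1 < k'+2 by omega),
            show (m+1)-(k'+1) = 0 from by omega]
          simp
        · have h1 : B (m+2) (k'+2) = 0 := B_eq_zero (by omega)
          have h2 : B (m+1) (k'+2) = 0 := B_eq_zero (by omega)
          have h3' : B (m+1) (k'+1) = 0 := B_eq_zero (by omega)
          rw [h1, h2, h3']; simp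


lemma B_diag (m : ℕ) : B m m = 1 := by
  induction m with
  | zero => rfl
  | succ m ih => rw [B_succ_succ, B_eq_zero (show m < m+1 by omega), ih, Nat.sub_self]; simp

lemma B_factor : ∀ m j : ℕ, j ≤ m →
    B m j * ∏ k ∈ range j, (1 - XX^(2*(k+1))) = ∏ k ∈ range j, (1 - XX^(2*(m - j + 1 + k))) := by
  intro m
  induction m with
  | zero =>
    intro j hj
    interval_cases j
    simp [B_zero_right]
  | succ m ih =>
    intro j hj
    match j with
    | 0 => simp [B_zero_right]
    | j'+1 =>
      rcases le_or_gt (j'+1) m with hjm | hjm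
      · obtain ⟨e, rfl⟩ : ∃ e, m = j'+1+e := ⟨m - (j'+1), by omega⟩
        have ih1 : B (j'+1+e) (j'+1) * ∏ k ∈ range (j'+1), (1 - XX^(2*(k+1)))
            = ∏ k ∈ range (j'+1), (1 - XX^(2*(e+1+k))) := by
          rw [ih (j'+1) (by omega)]
          exact Finset.prod_congr rfl fun k _ => by rw [show j'+1+e-(j'+1)+1+k = e+1+k from by omega]
        have ih2 : B (j'+1+e) j' * ∏ k ∈ range j', (1 - XX^(2*(k+1)))
            = ∏ k ∈ range j', (1 - XX^(2*(e+2+k))) := by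
          rw [ih j' (by omega)]
          exact Finset.prod_congr rfl fun k _ => by rw [show j'+1+e-j'+1+k = e+2+k from by omega]
        rw [B_succ_succ, show j'+1+e-j' = e+1 from by omega]
        -- target RHS: ∏_{k<j'+1} (1 - XX^(2*(j'+1+e+1-(j'+1)+1+k))) = ∏ (1-XX^(2*(e+2+k)))
        have hR : ∏ k ∈ range (j'+1), (1 - XX^(2*(j'+1+e+1-(j'+1)+1+k)))
            = (∏ k ∈ range j', (1 - XX^(2*(e+2+k)))) * (1 - XX^(2*(e+2+j'))) := by
          rw [Finset.prod_range_succ]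
          exact congrArg₂ _ (Finset.prod_congr rfl fun k _ => by
            rw [show j'+1+e+1-(j'+1)+1+k = e+2+k from by omega]) (by
            rw [show j'+1+e+1-(j'+1)+1+j' = e+2+j' from by omega])
        rw [hR]
        -- LHS: (B (j'+1) + X^{2(e+1)} B j') * P(j'+1)
        have hP : ∏ k ∈ range (j'+1), (1 - XX^(2*(k+1)))
            = (∏ k ∈ range j', (1 - XX^(2*(k+1)))) * (1 - XX^(2*(j'+1))) := Finset.prod_range_succ _ _
        have hpeel : ∏ k ∈ range (j'+1), (1 - XX^(2*(e+1+k)))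
            = (∏ k ∈ range j', (1 - XX^(2*(e+2+k)))) * (1 - XX^(2*(e+1))) := by
          rw [Finset.prod_range_succ']
          exact congrArg₂ _ (Finset.prod_congr rfl fun k _ => by
            rw [show e+1+(k+1) = e+2+k from by omega]) (by rw [show e+1+0 = e+1 from by omega])
        calc (B (j'+1+e) (j'+1) + XX ^ (2*(e+1)) * B (j'+1+e) j') *
              ∏ k ∈ range (j'+1), (1 - XX^(2*(k+1)))
            = B (j'+1+e) (j'+1) * ∏ k ∈ range (j'+1), (1 - XX^(2*(k+1)))
              + XX ^ (2*(e+1)) * (B (j'+1+e) j' * ∏ k ∈ range j', (1 - XX^(2*(k+1))))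
                * (1 - XX^(2*(j'+1))) := by rw [hP]; ring
          _ = (∏ k ∈ range j', (1 - XX^(2*(e+2+k)))) * (1 - XX^(2*(e+1)))
              + XX ^ (2*(e+1)) * (∏ k ∈ range j', (1 - XX^(2*(e+2+k)))) * (1 - XX^(2*(j'+1))) := by
                rw [ih1, hpeel, ih2]
          _ = (∏ k ∈ range j', (1 - XX^(2*(e+2+k)))) * (1 - XX^(2*(e+2+j'))) := by
                rw [show (2*(e+2+j')) = 2*(e+1) + 2*(j'+1) from by omega, pow_add]
                ring
      · -- j' = m : B (m+1) (m+1) = 1 and the RHS product is the same as the LHS one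
        obtain rfl : j' = m := by omega
        rw [B_diag, one_mul]
        exact Finset.prod_congr rfl fun k _ => by
          rw [show 2*(k+1) = 2*(j'+1-(j'+1)+1+k) from by omega]


/-- guarded shift by one -/
noncomputable def B1 (m : ℕ) : ℕ → PowerSeries ℤ
  | 0 => 0
  | j+1 => B m j

/-- guarded shift by two -/
noncomputable def B2 (m : ℕ) : ℕ → PowerSeries ℤ
  | 0 => 0
  | 1 => 0
  | j+2 => B m j

lemma B_DP (m j : ℕ) : B (m+2) j =
    XX^(2*j) * B m j + (1 + XX^(2*(m+1))) * B1 m j + XX^(2*(m+2-j)) * B2 m j := by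
  match j with
  | 0 => simp [B1, B2, B_zero_right]
  | 1 =>
    have h1 : B (m+2) 1 = B (m+1) 1 + XX ^ (2*(m+1)) := by
      rw [B_succ_succ (m+1) 0, B_zero_right, Nat.sub_zero, mul_one]
    have h2 : B (m+1) 1 = XX^2 * B m 1 + 1 := by
      have := B_pascal2 m 0
      rw [B_zero_right] at this
      norm_num at this ⊢
      exact this
    rw [h1, h2]
    simp [B1, B2, B_zero_right]
    ring
  | j'+2 =>
    have h1 : B (m+2) (j'+2) = B (m+1) (j'+2) + XX ^ (2*(m - j')) * B (m+1) (j'+1) := by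
      rw [B_succ_succ (m+1) (j'+1), show m+1-(j'+1) = m - j' from by omega]
    have h2 : B (m+1) (j'+2) = XX^(2*(j'+2)) * B m (j'+2) + B m (j'+1) := by
      simpa using B_pascal2 m (j'+1)
    have h3 : B (m+1) (j'+1) = XX^(2*(j'+1)) * B m (j'+1) + B m j' := B_pascal2 m j'
    rw [h1, h2, h3]
    show _ = XX^(2*(j'+2)) * B m (j'+2) + (1 + XX^(2*(m+1))) * B m (j'+1)
        + XX^(2*(m+2-(j'+2))) * B m j'
    rcases le_or_gt j' m with hjm | hjm
    · obtain ⟨e, rfl⟩ : ∃ e, m = j'+e := ⟨m - j', by omega⟩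
      rw [show j'+e - j' = e from by omega, show j'+e+2-(j'+2) = e from by omega,
        show 2*(j'+e+1) = 2*e + 2*(j'+1) from by omega]
      rw [pow_add]
      ring
    · rw [B_eq_zero (show m < j'+2 by omega), B_eq_zero (show m < j'+1 by omega),
        B_eq_zero (show m < j' by omega)]
      ring

/-- the exponent `(j-n)^2 + j`, symmetrized for ℕ-subtraction -/
def E (j n : ℕ) : ℕ := (j - n)^2 + (n - j)^2 + j

lemma E_L1 (j n : ℕ) : 2*j + E j (n+1) = E j n + (2*n+1) := by
  unfold E
  rcases le_or_gt n j with h | h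
  · obtain ⟨e, rfl⟩ : ∃ e, j = n + e := ⟨j - n, by omega⟩
    rcases Nat.eq_zero_or_pos e with rfl | he
    · simp only [show n+0-(n+1) = 0 from by omega, show n+1-(n+0) = 1 from by omega,
        show n+0-n = 0 from by omega, show n-(n+0) = 0 from by omega]
      ring
    · obtain ⟨f, rfl⟩ : ∃ f, e = f + 1 := ⟨e - 1, by omega⟩
      rw [show n+(f+1)-(n+1) = f from by omega, show n+1-(n+(f+1)) = 0 from by omega,
        show n+(f+1)-n = f+1 from by omega, show n-(n+(f+1)) = 0 from by omega]
      ring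
  · obtain ⟨e, rfl⟩ : ∃ e, n = j + e + 1 := ⟨n - j - 1, by omega⟩
    rw [show j - (j+e+1+1) = 0 from by omega, show j+e+1+1-j = e+2 from by omega,
      show j - (j+e+1) = 0 from by omega, show j+e+1-j = e+1 from by omega]
    ring

lemma E_L2 (j n : ℕ) : E (j+1) (n+1) = E j n + 1 := by
  unfold E
  rw [show j+1-(n+1) = j - n from by omega, show n+1-(j+1) = n - j from by omega]
  ring

lemma E_L3 (j n : ℕ) (h : j ≤ 2*n) : 2*(2*n-j) + E (j+2) (n+1) = E j n + (2*n+3) := by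
  unfold E
  rcases le_or_gt n j with h' | h'
  · obtain ⟨e, rfl⟩ : ∃ e, j = n + e := ⟨j - n, by omega⟩
    rw [show n+e+2-(n+1) = e+1 from by omega, show n+1-(n+e+2) = 0 from by omega,
      show n+e-n = e from by omega, show n-(n+e) = 0 from by omega]
    have he : e ≤ n := by omega
    obtain ⟨f, rfl⟩ : ∃ f, n = e + f := ⟨n - e, by omega⟩
    rw [show 2*(e+f)-(e+f+e) = f from by omega]
    ring
  · obtain ⟨e, rfl⟩ : ∃ e, n = j + e + 1 := ⟨n - j - 1, by omega⟩
    rw [show j+2-(j+e+1+1) = 0 from by omega, show j+e+1+1-(j+2) = e from by omega,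
      show j-(j+e+1) = 0 from by omega, show j+e+1-j = e+1 from by omega,
      show 2*(j+e+1)-j = j + 2*e + 2 from by omega]
    ring

lemma jtp : ∀ n, ∑ j ∈ range (2*n+1), B (2*n) j * XX ^ (E j n)
    = XX ^ n * ∏ k ∈ range n, ((1 + XX^(2*(k+1))) * (1 + XX^(2*k))) := by
  intro n
  induction n with
  | zero => simp [B, E]
  | succ n ih =>
    have hRHS : XX^(n+1) * ∏ k ∈ range (n+1), ((1 + XX^(2*(k+1))) * (1 + XX^(2*k)))
        = (XX^n * ∏ k ∈ range n, ((1 + XX^(2*(k+1))) * (1 + XX^(2*k)))) *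
          (XX*(1+XX^(2*(n+1)))*(1+XX^(2*n))) := by
      rw [Finset.prod_range_succ, pow_succ]
      ring
    rw [hRHS, ← ih, Finset.sum_mul]
    have hsplit : ∀ j, B (2*(n+1)) j * XX ^ (E j (n+1))
        = XX^(2*j) * B (2*n) j * XX ^ (E j (n+1))
          + (1 + XX^(2*(2*n+1))) * B1 (2*n) j * XX ^ (E j (n+1))
          + XX^(2*(2*n+2-j)) * B2 (2*n) j * XX ^ (E j (n+1)) := by
      intro j
      rw [show 2*(n+1) = 2*n+2 from by omega, B_DP (2*n) j]
      ring
    rw [show 2*(n+1)+1 = (2*n+2)+1 from by omega]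
    rw [Finset.sum_congr rfl (fun j _ => hsplit j), Finset.sum_add_distrib,
      Finset.sum_add_distrib]
    have h1 : ∑ j ∈ range (2*n+2+1), XX^(2*j) * B (2*n) j * XX ^ (E j (n+1))
        = ∑ j ∈ range (2*n+1), B (2*n) j * XX ^ (E j n) * XX^(2*n+1) := by
      rw [Finset.sum_range_succ, Finset.sum_range_succ,
        B_eq_zero (show 2*n < 2*n+2 by omega), B_eq_zero (show 2*n < 2*n+1 by omega)]
      simp only [mul_zero, zero_mul, add_zero]
      refine Finset.sum_congr rfl fun j _ => ?_
      calc XX^(2*j) * B (2*n) j * XX ^ (E j (n+1))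
          = B (2*n) j * XX ^ (2*j + E j (n+1)) := by rw [pow_add]; ring
        _ = B (2*n) j * XX ^ (E j n) * XX^(2*n+1) := by rw [E_L1, pow_add]; ring
    have h2 : ∑ j ∈ range (2*n+2+1), (1 + XX^(2*(2*n+1))) * B1 (2*n) j * XX ^ (E j (n+1))
        = ∑ j ∈ range (2*n+1), B (2*n) j * XX ^ (E j n) * (XX + XX^(4*n+3)) := by
      rw [Finset.sum_range_succ']
      simp only [B1, mul_zero, zero_mul, add_zero]
      rw [Finset.sum_range_succ, B_eq_zero (show 2*n < 2*n+1 by omega)]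
      simp only [mul_zero, zero_mul, add_zero]
      refine Finset.sum_congr rfl fun j _ => ?_
      calc (1 + XX^(2*(2*n+1))) * B (2*n) j * XX ^ (E (j+1) (n+1))
          = (1 + XX^(2*(2*n+1))) * B (2*n) j * (XX ^ (E j n) * XX) := by
            rw [E_L2, pow_add]; ring
        _ = B (2*n) j * XX ^ (E j n) * (XX + XX^(4*n+3)) := by
            rw [show 2*(2*n+1) = 4*n+2 from by omega, show (4*n+3) = (4*n+2)+1 from by omega,
              pow_add]
            ring
    have h3 : ∑ j ∈ range (2*n+2+1), XX^(2*(2*n+2-j)) * B2 (2*n) j * XX ^ (E j (n+1))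
        = ∑ j ∈ range (2*n+1), B (2*n) j * XX ^ (E j n) * XX^(2*n+3) := by
      rw [Finset.sum_range_succ']
      simp only [B2, mul_zero, zero_mul, add_zero]
      rw [Finset.sum_range_succ']
      simp only [B2, mul_zero, zero_mul, add_zero]
      refine Finset.sum_congr rfl fun j hj => ?_
      have hj' : j ≤ 2*n := by have := Finset.mem_range.mp hj; omega
      calc XX^(2*(2*n+2-(j+1+1))) * B (2*n) j * XX ^ (E (j+2) (n+1))
          = B (2*n) j * XX ^ (2*(2*n-j) + E (j+2) (n+1)) := by
            rw [show 2*n+2-(j+1+1) = 2*n - j from by omega, pow_add]; ring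
        _ = B (2*n) j * XX ^ (E j n) * XX^(2*n+3) := by
            rw [E_L3 j n hj', pow_add]; ring
    rw [h1, h2, h3, ← Finset.sum_add_distrib, ← Finset.sum_add_distrib]
    refine Finset.sum_congr rfl fun j _ => ?_
    rw [show (4*n+3) = 2*(n+1) + (2*n+1) from by omega, show 2*n+3 = 2*(n+1)+1 from by omega,
      show 2*n+1 = 2*n+1 from rfl, pow_add, pow_add]
    ring

-- ============================ new material ============================

lemma MD_one_sub_X_pow {t e : ℕ} (h : t ≤ e) : MD t (1 - XX ^ e) 1 := by
  have : (1 - XX^e) - 1 = -XX^e := by ring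
  rw [MD, this]
  exact Dvd.dvd.neg_right (pow_dvd_pow XX h)

lemma MD_one_add_X_pow {t e : ℕ} (h : t ≤ e) : MD t (1 + XX ^ e) 1 := by
  have : (1 + XX^e) - 1 = XX^e := by ring
  rw [MD, this]
  exact pow_dvd_pow XX h

/-- the theta partial sum -/
noncomputable def th (L : ℕ) : PowerSeries ℤ := ∑ i ∈ range L, XX^(i*(i+1))

lemma th_stable {t L L' : ℕ} (h : L ≤ L') (ht : t ≤ L*(L+1)) : MD t (th L') (th L) := by
  unfold th
  rw [← Finset.sum_range_add_sum_Ico _ h]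
  have : MD t (∑ i ∈ Finset.Ico L L', XX^(i*(i+1))) 0 := by
    have := MD.sum (t := t) (s := Finset.Ico L L') (f := fun i => XX^(i*(i+1))) (g := fun _ => 0)
      (fun i hi => by
        have hiL : L ≤ i := (Finset.mem_Ico.mp hi).1
        exact MD_X_pow (le_trans ht (Nat.mul_le_mul hiL (by omega))))
    simpa using this
  have h2 := (MD.refl t (th L)).add this
  unfold th at h2
  simpa using h2

/-- Step A : evaluation of `∑_j X^(E j n)`. -/
lemma sum_E (n : ℕ) : ∑ j ∈ range (2*n+1), XX ^ (E j n) = XX^n * (th (n+1) + th n) := by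
  have hsplit : ∑ j ∈ range (2*n+1), XX ^ (E j n)
      = (∑ j ∈ range n, XX ^ (E j n)) + ∑ j ∈ Finset.Ico n (2*n+1), XX ^ (E j n) := by
    rw [Finset.sum_range_add_sum_Ico _ (by omega : n ≤ 2*n+1)]
  have hlow : ∑ j ∈ range n, XX ^ (E j n) = XX^n * th n := by
    rw [← Finset.sum_range_reflect]
    unfold th
    rw [Finset.mul_sum]
    refine Finset.sum_congr rfl fun i hi => ?_
    have hi' : i < n := Finset.mem_range.mp hi
    have hE : E (n-1-i) n = i*(i+1) + n := by
      unfold E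
      rw [show n-1-i-n = 0 from by omega, show n-(n-1-i) = i+1 from by omega]
      obtain ⟨e, rfl⟩ : ∃ e, n = i+1+e := ⟨n-i-1, by omega⟩
      rw [show i+1+e-1-i = e from by omega]
      ring
    rw [hE, pow_add]
    ring
  have hhigh : ∑ j ∈ Finset.Ico n (2*n+1), XX ^ (E j n) = XX^n * th (n+1) := by
    rw [Finset.sum_Ico_eq_sum_range, show 2*n+1-n = n+1 from by omega]
    unfold th
    rw [Finset.mul_sum]
    refine Finset.sum_congr rfl fun i _ => ?_
    have hE : E (n+i) n = i*(i+1) + n := by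
      unfold E
      rw [show n+i-n = i from by omega, show n-(n+i) = 0 from by omega]
      ring
    rw [hE, pow_add]
    ring
  rw [hsplit, hlow, hhigh]
  ring

/-- Step B : `B (2n) j * C(2n) ≡ 1`. -/
lemma BC (n j : ℕ) (hj : j ≤ 2*n) :
    MD (min (2*(2*n-j)+2) (2*(j+1))) (B (2*n) j * ∏ k ∈ range (2*n), (1 - XX^(2*(k+1)))) 1 := by
  have hC : ∏ k ∈ range (2*n), (1 - XX^(2*(k+1)))
      = (∏ k ∈ range j, (1 - XX^(2*(k+1)))) * ∏ k ∈ Finset.Ico j (2*n), (1 - XX^(2*(k+1))) := by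
    rw [Finset.prod_range_mul_prod_Ico _ hj]
  rw [hC, ← mul_assoc, B_factor (2*n) j hj]
  have h1 : MD (2*(2*n-j)+2) (∏ k ∈ range j, (1 - XX^(2*(2*n - j + 1 + k)))) 1 := by
    have := MD.prod (t := 2*(2*n-j)+2) (s := range j)
      (f := fun k => 1 - XX^(2*(2*n - j + 1 + k))) (g := fun _ => 1)
      (fun k _ => MD_one_sub_X_pow (by omega))
    simpa using this
  have h2 : MD (2*(j+1)) (∏ k ∈ Finset.Ico j (2*n), (1 - XX^(2*(k+1)))) 1 := by
    have := MD.prod (t := 2*(j+1)) (s := Finset.Ico j (2*n))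
      (f := fun k => 1 - XX^(2*(k+1))) (g := fun _ => 1)
      (fun k hk => MD_one_sub_X_pow (by
        have := (Finset.mem_Ico.mp hk).1
        omega))
    simpa using this
  have := (h1.of_le (min_le_left _ _)).mul (h2.of_le (min_le_right _ _))
  simpa using this

/-- the min bound needed in Step C -/
lemma BC_bound (n j : ℕ) (hj : j ≤ 2*n) :
    2*n ≤ E j n + min (2*(2*n-j)+2) (2*(j+1)) := by
  have key : ∀ a b : ℕ, 2*n ≤ E j n + a → 2*n ≤ E j n + b → 2*n ≤ E j n + min a b := by
    intro a b h1 h2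
    rcases min_choice a b with h | h <;> omega
  refine key _ _ ?_ ?_ <;> unfold E
  · rcases le_or_gt n j with h | h
    · obtain ⟨i, rfl⟩ : ∃ i, j = n + i := ⟨j - n, by omega⟩
      rw [show n+i-n = i from by omega, show n-(n+i) = 0 from by omega,
        show 2*n-(n+i) = n - i from by omega]
      have : i ≤ n := by omega
      generalize i^2 = a
      omega
    · obtain ⟨e, he⟩ : ∃ e, n = j + e + 1 := ⟨n - j - 1, by omega⟩
      rw [he, show j-(j+e+1) = 0 from by omega, show j+e+1-j = e+1 from by omega,
        show 2*(j+e+1)-j = j+2*e+2 from by omega]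
      generalize (e+1)^2 = a
      omega
  · rcases le_or_gt n j with h | h
    · obtain ⟨i, rfl⟩ : ∃ i, j = n + i := ⟨j - n, by omega⟩
      rw [show n+i-n = i from by omega, show n-(n+i) = 0 from by omega]
      generalize i^2 = a
      omega
    · obtain ⟨e, he⟩ : ∃ e, n = j + e + 1 := ⟨n - j - 1, by omega⟩
      rw [he, show j-(j+e+1) = 0 from by omega, show j+e+1-j = e+1 from by omega]
      have h2 : 2*e ≤ (e+1)^2 := by nlinarith
      generalize (e+1)^2 = a at h2 ⊢
      omega

/-- Gauss's identity, truncated: `θ ≡ ∏ (1+X^{2(k+1)})(1-X^{4(k+1)}) mod X^{N+1}`. -/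
lemma gauss (N : ℕ) :
    MD (N+1) (th (N+2)) (∏ k ∈ range N, ((1 + XX^(2*(k+1))) * (1 - XX^(4*(k+1))))) := by
  have hjtpC : XX^(N+1) * ((∏ k ∈ range (N+1), ((1 + XX^(2*(k+1))) * (1 + XX^(2*k)))) *
        ∏ k ∈ range (2*(N+1)), (1 - XX^(2*(k+1))))
      = ∑ j ∈ range (2*(N+1)+1),
          (B (2*(N+1)) j * ∏ k ∈ range (2*(N+1)), (1 - XX^(2*(k+1)))) * XX ^ (E j (N+1)) := by
    rw [← mul_assoc, ← jtp (N+1), Finset.sum_mul]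
    refine Finset.sum_congr rfl fun j _ => ?_
    ring
  have hsum : MD ((N+1) + (N+1))
      (∑ j ∈ range (2*(N+1)+1),
        (B (2*(N+1)) j * ∏ k ∈ range (2*(N+1)), (1 - XX^(2*(k+1)))) * XX ^ (E j (N+1)))
      (∑ j ∈ range (2*(N+1)+1), XX ^ (E j (N+1))) := by
    refine MD.sum fun j hj => ?_
    have hj' : j ≤ 2*(N+1) := by have := Finset.mem_range.mp hj; omega
    have h1 := BC (N+1) j hj'
    have h3 : MD (min (2*(2*(N+1)-j)+2) (2*(j+1)) + E j (N+1))
        ((B (2*(N+1)) j * ∏ k ∈ range (2*(N+1)), (1 - XX^(2*(k+1)))) * XX ^ (E j (N+1)))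
        (1 * XX ^ (E j (N+1))) := by
      rw [MD] at h1 ⊢
      have heq : (B (2*(N+1)) j * ∏ k ∈ range (2*(N+1)), (1 - XX^(2*(k+1)))) * XX ^ (E j (N+1))
          - 1 * XX ^ (E j (N+1))
          = ((B (2*(N+1)) j * ∏ k ∈ range (2*(N+1)), (1 - XX^(2*(k+1)))) - 1) * XX ^ (E j (N+1)) := by
        ring
      rw [heq, pow_add]
      exact mul_dvd_mul h1 dvd_rfl
    have hb := BC_bound (N+1) j hj'
    simpa using h3.of_le (show (N+1)+(N+1) ≤ min (2*(2*(N+1)-j)+2) (2*(j+1)) + E j (N+1)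
      from by omega)
  have hmain : MD ((N+1) + (N+1))
      (XX^(N+1) * ((∏ k ∈ range (N+1), ((1 + XX^(2*(k+1))) * (1 + XX^(2*k)))) *
        ∏ k ∈ range (2*(N+1)), (1 - XX^(2*(k+1)))))
      (XX^(N+1) * (th (N+2) + th (N+1))) := by
    rw [hjtpC]
    refine hsum.trans ?_
    rw [show ∑ j ∈ range (2*(N+1)+1), XX ^ (E j (N+1)) = XX^(N+1) * (th ((N+1)+1) + th (N+1))
      from sum_E (N+1)]
    exact MD.refl _ _
  have hcancel := MD_cancel_X_pow hmain
  have hth : MD (N+1) (th (N+2) + th (N+1)) (2 * th (N+2)) := by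
    have h2 : MD (N+1) (th (N+1)) (th (N+2)) :=
      (th_stable (by omega) (by nlinarith)).symm
    have := (MD.refl (N+1) (th (N+2))).add h2
    rw [two_mul]
    exact this
  have hprod : MD (N+1)
      ((∏ k ∈ range (N+1), ((1 + XX^(2*(k+1))) * (1 + XX^(2*k)))) *
        ∏ k ∈ range (2*(N+1)), (1 - XX^(2*(k+1))))
      (2 * ∏ k ∈ range N, ((1 + XX^(2*(k+1))) * (1 - XX^(4*(k+1))))) := by
    have e1 : ∏ k ∈ range (N+1), ((1 + XX^(2*(k+1))) * (1 + XX^(2*k)))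
        = (∏ k ∈ range (N+1), (1 + XX^(2*(k+1)))) * ∏ k ∈ range (N+1), (1 + XX^(2*k)) :=
      Finset.prod_mul_distrib
    have e2 : ∏ k ∈ range (N+1), (1 + XX^(2*k))
        = 2 * ∏ k ∈ range N, (1 + XX^(2*(k+1))) := by
      rw [Finset.prod_range_succ']
      norm_num
      ring
    have e3 : ∏ k ∈ range (N+1), (1 + XX^(2*(k+1)))
        = (∏ k ∈ range N, (1 + XX^(2*(k+1)))) * (1 + XX^(2*(N+1))) :=
      Finset.prod_range_succ _ _
    have e4 : ∏ k ∈ range (2*(N+1)), (1 - XX^(2*(k+1)))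
        = (∏ k ∈ range N, (1 - XX^(2*(k+1)))) *
          ∏ k ∈ Finset.Ico N (2*(N+1)), (1 - XX^(2*(k+1))) :=
      (Finset.prod_range_mul_prod_Ico _ (by omega)).symm
    have m1 : MD (N+1) (1 + XX^(2*(N+1))) 1 := MD_one_add_X_pow (by omega)
    have m2 : MD (N+1) (∏ k ∈ Finset.Ico N (2*(N+1)), (1 - XX^(2*(k+1)))) 1 := by
      have := MD.prod (t := N+1) (s := Finset.Ico N (2*(N+1)))
        (f := fun k => 1 - XX^(2*(k+1))) (g := fun _ => 1)
        (fun k hk => MD_one_sub_X_pow (by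
          have := (Finset.mem_Ico.mp hk).1
          omega))
      simpa using this
    have epair : (∏ k ∈ range N, (1 + XX^(2*(k+1)))) * (∏ k ∈ range N, (1 + XX^(2*(k+1)))) *
        (∏ k ∈ range N, (1 - XX^(2*(k+1))))
        = ∏ k ∈ range N, ((1 + XX^(2*(k+1))) * (1 - XX^(4*(k+1)))) := by
      rw [← Finset.prod_mul_distrib, ← Finset.prod_mul_distrib]
      refine Finset.prod_congr rfl fun k _ => ?_
      have hx : (XX:PowerSeries ℤ)^(4*(k+1)) = XX^(2*(k+1)) * XX^(2*(k+1)) := by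
        rw [← pow_add]
        congr 1
        omega
      rw [hx]
      ring
    have heq : (∏ k ∈ range (N+1), ((1 + XX^(2*(k+1))) * (1 + XX^(2*k)))) *
        ∏ k ∈ range (2*(N+1)), (1 - XX^(2*(k+1)))
        = 2 * (((∏ k ∈ range N, (1 + XX^(2*(k+1)))) * (∏ k ∈ range N, (1 + XX^(2*(k+1)))) *
            (∏ k ∈ range N, (1 - XX^(2*(k+1))))) *
          ((1 + XX^(2*(N+1))) * ∏ k ∈ Finset.Ico N (2*(N+1)), (1 - XX^(2*(k+1))))) := by
      rw [e1, e2, e3, e4]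
      ring
    rw [heq, epair]
    have hm : MD (N+1)
        ((∏ k ∈ range N, ((1 + XX^(2*(k+1))) * (1 - XX^(4*(k+1))))) *
          ((1 + XX^(2*(N+1))) * ∏ k ∈ Finset.Ico N (2*(N+1)), (1 - XX^(2*(k+1)))))
        ((∏ k ∈ range N, ((1 + XX^(2*(k+1))) * (1 - XX^(4*(k+1))))) * 1) :=
      (MD.refl _ _).mul (by simpa using m1.mul m2)
    have := (MD.refl (N+1) (2:PowerSeries ℤ)).mul hm
    rw [mul_one] at this
    exact this
  -- chain : 2 θ ≡ θ+θ ≡ Π C ≡ 2 ∏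
  have hchain : MD (N+1) (2 * th (N+2))
      (2 * ∏ k ∈ range N, ((1 + XX^(2*(k+1))) * (1 - XX^(4*(k+1))))) :=
    (hth.symm.trans hcancel.symm).trans hprod
  exact MD_cancel_two hchain


-- ======================= new material =======================

/-- the distinct-parts product -/
noncomputable def DD (n : ℕ) : PowerSeries ℤ := ∏ k ∈ range (n+1), (1 + XX^(k+1))

/-- the model coefficient sequence -/
noncomputable def G0 (m : ℕ) : ℤ := PowerSeries.coeff (R := ℤ) m ((th (m+1))^2 * DD m)

lemma DD_stable {t n n' : ℕ} (h : n ≤ n') (ht : t ≤ n+2) : MD t (DD n') (DD n) := by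
  unfold DD
  rw [← Finset.prod_range_mul_prod_Ico _ (show n+1 ≤ n'+1 by omega)]
  have h2 : MD t (∏ k ∈ Finset.Ico (n+1) (n'+1), (1 + XX^(k+1))) 1 := by
    have := MD.prod (t := t) (s := Finset.Ico (n+1) (n'+1))
      (f := fun k => 1 + XX^(k+1)) (g := fun _ => 1)
      (fun k hk => MD_one_add_X_pow (by
        have := (Finset.mem_Ico.mp hk).1
        omega))
    simpa using this
  have := (MD.refl t (∏ k ∈ range (n+1), (1 + XX^(k+1)))).mul h2
  simpa using this

lemma mk_G0 (n : ℕ) : MD (n+1) (PowerSeries.mk G0) ((th (n+1))^2 * DD n) := by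
  rw [MD, PowerSeries.X_pow_dvd_iff]
  intro m hm
  rw [map_sub, PowerSeries.coeff_mk]
  have hmd : MD (m+1) ((th (n+1))^2 * DD n) ((th (m+1))^2 * DD m) := by
    refine MD.mul (MD.pow ?_ 2) (DD_stable (by omega) (by omega))
    exact th_stable (by omega) (by nlinarith)
  rw [show G0 m = PowerSeries.coeff (R := ℤ) m ((th (m+1))^2 * DD m) from rfl,
    ← hmd.coeff_eq (show m < m+1 by omega)]
  ring

lemma th_coeff_nonneg (L m : ℕ) : 0 ≤ PowerSeries.coeff (R := ℤ) m (th L) := by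
  unfold th
  rw [map_sum]
  refine Finset.sum_nonneg fun i _ => ?_
  rw [PowerSeries.coeff_X_pow]
  split <;> norm_num

lemma coeff_mul_nonneg {f g : PowerSeries ℤ} (hf : ∀ m, 0 ≤ PowerSeries.coeff (R := ℤ) m f)
    (hg : ∀ m, 0 ≤ PowerSeries.coeff (R := ℤ) m g) (m : ℕ) : 0 ≤ PowerSeries.coeff (R := ℤ) m (f * g) := by
  rw [PowerSeries.coeff_mul]
  exact Finset.sum_nonneg fun p _ => mul_nonneg (hf p.1) (hg p.2)

lemma prod_one_add_coeff_nonneg (s : Finset ℕ) (m : ℕ) :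
    0 ≤ PowerSeries.coeff (R := ℤ) m (∏ k ∈ s, (1 + XX^(k+1))) := by
  classical
  induction s using Finset.induction_on generalizing m with
  | empty => simp [PowerSeries.coeff_one]; split <;> norm_num
  | @insert a s' ha ih =>
    rw [Finset.prod_insert ha]
    refine coeff_mul_nonneg (fun m' => ?_) (fun m' => ih m') m
    rw [map_add, PowerSeries.coeff_one, PowerSeries.coeff_X_pow]
    split <;> split <;> norm_num

lemma prod_one_add_constantCoeff (s : Finset ℕ) :
    PowerSeries.coeff (R := ℤ) 0 (∏ k ∈ s, (1 + XX^(k+1))) = 1 := by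
  rw [PowerSeries.coeff_zero_eq_constantCoeff, map_prod]
  refine Finset.prod_eq_one fun k _ => ?_
  rw [map_add, map_one, map_pow, PowerSeries.constantCoeff_X]
  simp

lemma th_sq_constantCoeff (L : ℕ) : PowerSeries.coeff (R := ℤ) 0 ((th (L+1))^2) = 1 := by
  have h : PowerSeries.constantCoeff (R := ℤ) (th (L+1)) = 1 := by
    unfold th
    rw [map_sum, Finset.sum_eq_single 0]
    · simp
    · intro i _ hi
      rw [map_pow, PowerSeries.constantCoeff_X, zero_pow (by positivity)]
    · intro h
      simp at h
  rw [PowerSeries.coeff_zero_eq_constantCoeff, map_pow, h, one_pow]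

lemma DD_coeff_ge_one (m : ℕ) : 1 ≤ PowerSeries.coeff (R := ℤ) m (DD m) := by
  unfold DD
  rcases Nat.eq_zero_or_pos m with rfl | hm
  · rw [prod_one_add_constantCoeff]
  · have hmem : m - 1 ∈ range (m+1) := by
      rw [Finset.mem_range]; omega
    rw [← Finset.mul_prod_erase _ _ hmem, show m-1+1 = m from by omega]
    rw [add_mul, one_mul, map_add]
    have h1 : 0 ≤ PowerSeries.coeff (R := ℤ) m (∏ k ∈ (range (m+1)).erase (m-1), (1 + XX^(k+1))) :=
      prod_one_add_coeff_nonneg _ m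
    have h2 : PowerSeries.coeff (R := ℤ) m
        (XX^m * ∏ k ∈ (range (m+1)).erase (m-1), (1 + XX^(k+1))) = 1 := by
      have h2' := PowerSeries.coeff_X_pow_mul
        (∏ k ∈ (range (m+1)).erase (m-1), (1 + XX^(k+1))) m 0
      rw [zero_add] at h2'
      rw [h2']
      exact prod_one_add_constantCoeff _
    omega

lemma G0_ge_one (m : ℕ) : 1 ≤ G0 m := by
  unfold G0
  rw [PowerSeries.coeff_mul]
  have hmem : ((0:ℕ), m) ∈ Finset.HasAntidiagonal.antidiagonal m := by
    simp
  have hle : (1:ℤ) ≤ PowerSeries.coeff (R := ℤ) 0 ((th (m+1))^2) * PowerSeries.coeff (R := ℤ) m (DD m) := by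
    rw [th_sq_constantCoeff m, one_mul]
    exact DD_coeff_ge_one m
  refine le_trans hle ?_
  refine Finset.single_le_sum (f := fun p => PowerSeries.coeff (R := ℤ) p.1 ((th (m+1))^2) *
    PowerSeries.coeff (R := ℤ) p.2 (DD m)) (fun p _ => ?_) hmem
  refine mul_nonneg ?_ (prod_one_add_coeff_nonneg _ _)
  rw [sq]
  exact coeff_mul_nonneg (th_coeff_nonneg (m+1)) (th_coeff_nonneg (m+1)) p.1

/-- the model satisfies the defining relation -/
lemma model (n : ℕ) :
    PowerSeries.coeff (R := ℤ) n (PowerSeries.mk G0 *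
        (∏ k ∈ range (n+1), (1 - XX^(k+1))) * (∏ k ∈ range (n+1), (1 - XX^(2*(k+1)))))
      = PowerSeries.coeff (R := ℤ) n ((∏ k ∈ range (n+1), (1 - XX^(4*(k+1))))^4) := by
  have hDP : DD n * ∏ k ∈ range (n+1), (1 - XX^(k+1)) = ∏ k ∈ range (n+1), (1 - XX^(2*(k+1))) := by
    unfold DD
    rw [← Finset.prod_mul_distrib]
    refine Finset.prod_congr rfl fun k _ => ?_
    have hx : (XX:PowerSeries ℤ)^(2*(k+1)) = XX^(k+1) * XX^(k+1) := by
      rw [← pow_add]; congr 1; omega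
    rw [hx]; ring
  -- θ · Q ≡ R²
  have hW : MD (n+1) (th (n+1)) (∏ k ∈ range (n+1), ((1 + XX^(2*(k+1))) * (1 - XX^(4*(k+1))))) := by
    have h1 : MD (n+1) (th (n+1)) (th (n+2)) := (th_stable (by omega) (by nlinarith)).symm
    refine h1.trans ((gauss n).trans ?_)
    rw [Finset.prod_range_succ]
    have hu : MD (n+1) ((1 + XX^(2*(n+1))) * (1 - XX^(4*(n+1)))) 1 := by
      have := (MD_one_add_X_pow (show n+1 ≤ 2*(n+1) by omega)).mul
        (MD_one_sub_X_pow (show n+1 ≤ 4*(n+1) by omega))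
      simpa using this
    have := (MD.refl (n+1) (∏ k ∈ range n, ((1 + XX^(2*(k+1))) * (1 - XX^(4*(k+1)))))).mul hu
    rw [mul_one] at this
    exact this.symm
  have hQR : MD (n+1) (th (n+1) * ∏ k ∈ range (n+1), (1 - XX^(2*(k+1))))
      ((∏ k ∈ range (n+1), (1 - XX^(4*(k+1))))^2) := by
    have h2 := hW.mul (MD.refl (n+1) (∏ k ∈ range (n+1), (1 - XX^(2*(k+1)))))
    refine h2.trans ?_
    have heq : (∏ k ∈ range (n+1), ((1 + XX^(2*(k+1))) * (1 - XX^(4*(k+1))))) *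
        (∏ k ∈ range (n+1), (1 - XX^(2*(k+1))))
        = (∏ k ∈ range (n+1), (1 - XX^(4*(k+1))))^2 := by
      rw [sq, ← Finset.prod_mul_distrib, ← Finset.prod_mul_distrib]
      refine Finset.prod_congr rfl fun k _ => ?_
      have hx : (XX:PowerSeries ℤ)^(4*(k+1)) = XX^(2*(k+1)) * XX^(2*(k+1)) := by
        rw [← pow_add]; congr 1; omega
      rw [hx]; ring
    rw [heq]
    exact MD.refl _ _
  have hmain : MD (n+1) (PowerSeries.mk G0 *
      (∏ k ∈ range (n+1), (1 - XX^(k+1))) * (∏ k ∈ range (n+1), (1 - XX^(2*(k+1)))))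
      ((∏ k ∈ range (n+1), (1 - XX^(4*(k+1))))^4) := by
    have h1 := ((mk_G0 n).mul (MD.refl (n+1) (∏ k ∈ range (n+1), (1 - XX^(k+1))))).mul
      (MD.refl (n+1) (∏ k ∈ range (n+1), (1 - XX^(2*(k+1)))))
    refine h1.trans ?_
    have heq : (th (n+1))^2 * DD n * (∏ k ∈ range (n+1), (1 - XX^(k+1))) *
        (∏ k ∈ range (n+1), (1 - XX^(2*(k+1))))
        = (th (n+1) * ∏ k ∈ range (n+1), (1 - XX^(2*(k+1))))^2 := by
      rw [show (th (n+1))^2 * DD n * (∏ k ∈ range (n+1), (1 - XX^(k+1))) *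
          (∏ k ∈ range (n+1), (1 - XX^(2*(k+1))))
          = (th (n+1))^2 * (DD n * ∏ k ∈ range (n+1), (1 - XX^(k+1))) *
            (∏ k ∈ range (n+1), (1 - XX^(2*(k+1)))) from by ring, hDP]
      ring
    rw [heq]
    have := hQR.pow 2
    rw [← pow_mul] at this
    norm_num at this
    exact this
  exact hmain.coeff_eq (by omega)

theorem main
    (g : ℕ → ℤ)
    (hg : ∀ n : ℕ,
      PowerSeries.coeff (R := ℤ) n
          (PowerSeries.mk g *
            (∏ k ∈ Finset.range (n + 1), (1 - PowerSeries.X ^ (k + 1))) *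
            (∏ k ∈ Finset.range (n + 1), (1 - PowerSeries.X ^ (2 * (k + 1))))) =
        PowerSeries.coeff (R := ℤ) n
          ((∏ k ∈ Finset.range (n + 1), (1 - PowerSeries.X ^ (4 * (k + 1)))) ^ 4)) :
    ∀ n : ℕ, 1 ≤ g n := by
  have huniq : ∀ n, g n = G0 n := by
    intro n
    induction n using Nat.strong_induction_on with
    | _ n ih =>
      have h1 := hg n
      have h2 := model n
      rw [← h2] at h1
      -- both sides as sums
      rw [mul_assoc, mul_assoc] at h1
      rw [PowerSeries.coeff_mul, PowerSeries.coeff_mul] at h1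
      set W := (∏ k ∈ range (n+1), (1 - XX^(k+1))) * (∏ k ∈ range (n+1), (1 - XX^(2*(k+1)))) with hWdef
      have hW0 : PowerSeries.coeff (R := ℤ) 0 W = 1 := by
        rw [hWdef, PowerSeries.coeff_zero_eq_constantCoeff, map_mul, map_prod, map_prod]
        have : ∀ e : ℕ, e ≠ 0 → PowerSeries.constantCoeff (R := ℤ) (1 - XX^e) = 1 := by
          intro e he
          rw [map_sub, map_one, map_pow, PowerSeries.constantCoeff_X, zero_pow he, sub_zero]
        rw [Finset.prod_eq_one fun k _ => this (k+1) (by omega),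
          Finset.prod_eq_one fun k _ => this (2*(k+1)) (by omega)]
        norm_num
      have hsub : ∑ p ∈ Finset.HasAntidiagonal.antidiagonal n,
          (g p.1 - G0 p.1) * PowerSeries.coeff (R := ℤ) p.2 W = 0 := by
        have : ∑ p ∈ Finset.HasAntidiagonal.antidiagonal n, (g p.1 - G0 p.1) * PowerSeries.coeff (R := ℤ) p.2 W
            = (∑ p ∈ Finset.HasAntidiagonal.antidiagonal n,
                PowerSeries.coeff (R := ℤ) p.1 (PowerSeries.mk g) * PowerSeries.coeff (R := ℤ) p.2 W)
              - ∑ p ∈ Finset.HasAntidiagonal.antidiagonal n,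
                PowerSeries.coeff (R := ℤ) p.1 (PowerSeries.mk G0) * PowerSeries.coeff (R := ℤ) p.2 W := by
          rw [← Finset.sum_sub_distrib]
          refine Finset.sum_congr rfl fun p _ => ?_
          rw [PowerSeries.coeff_mk, PowerSeries.coeff_mk]
          ring
        rw [this, h1]
        ring
      rw [Finset.sum_eq_single (n, 0)] at hsub
      · simp only at hsub
        rw [hW0, mul_one] at hsub
        omega
      · intro p hp hne
        have hpsum : p.1 + p.2 = n := Finset.HasAntidiagonal.mem_antidiagonal.mp hp
        have hp1 : p.1 < n := by
          rcases Nat.lt_or_ge p.1 n with h | h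
          · exact h
          · exfalso
            apply hne
            have : p.1 = n := by omega
            have : p.2 = 0 := by omega
            ext <;> omega
        rw [ih p.1 hp1]
        ring
      · intro hnotmem
        exfalso
        exact hnotmem (Finset.HasAntidiagonal.mem_antidiagonal.mpr (by omega))
  intro n
  rw [huniq n]
  exact G0_ge_one n


end Stmt18

/-- if `g : ℕ → ℤ` is defined by
`∑_{n≥0} g(n) qⁿ = ∏(1−q^{4n})⁴ / (∏(1−qⁿ) · ∏(1−q^{2n}))`
(stated coefficientwise after clearing the denominator, with the infinite products
truncated harmlessly), then every coefficient is positive, i.e. `g(n) ≥ 1` for all `n`. -/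
theorem coefficients_positive
    (g : ℕ → ℤ)
    (hg : ∀ n : ℕ,
      PowerSeries.coeff (R := ℤ) n
          (PowerSeries.mk g *
            (∏ k ∈ Finset.range (n + 1), (1 - PowerSeries.X ^ (k + 1))) *
            (∏ k ∈ Finset.range (n + 1), (1 - PowerSeries.X ^ (2 * (k + 1))))) =
        PowerSeries.coeff (R := ℤ) n
          ((∏ k ∈ Finset.range (n + 1), (1 - PowerSeries.X ^ (4 * (k + 1)))) ^ 4)) :
    ∀ n : ℕ, 1 ≤ g n :=
  Stmt18.main g hg
end

section
/- For every integer n ≥ 0, D4(2n+1) ≡ 0 (mod 4); that is, 4 divides M*(0,4,2n+1) − M*(2,4,2n+1). -/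
open PowerSeries Finset


lemma even_mul_aux {R : Type*} [CommRing R] (f g : PowerSeries R)
    (hf : ∀ m, Odd m → coeff (R := R) m f = 0) (hg : ∀ m, Odd m → coeff (R := R) m g = 0) :
    ∀ m, Odd m → coeff (R := R) m (f * g) = 0 := by
  intro m hm
  rw [coeff_mul]
  apply Finset.sum_eq_zero
  intro p hp
  rw [Finset.HasAntidiagonal.mem_antidiagonal] at hp
  rcases Nat.even_or_odd p.1 with h1 | h1
  · have : Odd p.2 := by
      rcases h1 with ⟨a, ha⟩; rcases hm with ⟨b, hb⟩
      rcases Nat.even_or_odd p.2 with ⟨c, hc⟩ | h; · omega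
      exact h
    rw [hg _ this, mul_zero]
  · rw [hf _ h1, zero_mul]

lemma even_one_sub {R : Type*} [CommRing R] (j : ℕ) :
    ∀ m, Odd m → coeff (R := R) m (1 - X ^ (2 * j)) = 0 := by
  intro m hm
  rw [map_sub, coeff_one, coeff_X_pow]
  have h1 : m ≠ 0 := by rintro rfl; simp [Nat.odd_iff] at hm
  have h2 : m ≠ 2 * j := by rintro rfl; simp [Nat.odd_iff, Nat.mul_mod_right] at hm
  simp [h1, h2]

lemma even_one_add {R : Type*} [CommRing R] (j : ℕ) :
    ∀ m, Odd m → coeff (R := R) m (1 + X ^ (2 * j)) = 0 := by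
  intro m hm
  rw [map_add, coeff_one, coeff_X_pow]
  have h1 : m ≠ 0 := by rintro rfl; simp [Nat.odd_iff] at hm
  have h2 : m ≠ 2 * j := by rintro rfl; simp [Nat.odd_iff, Nat.mul_mod_right] at hm
  simp [h1, h2]

lemma even_prod {R : Type*} [CommRing R] (s : Finset ℕ) (F : ℕ → PowerSeries R)
    (hF : ∀ k ∈ s, ∀ m, Odd m → coeff (R := R) m (F k) = 0) :
    ∀ m, Odd m → coeff (R := R) m (∏ k ∈ s, F k) = 0 := by
  classical
  induction s using Finset.induction with
  | empty =>
    intro m hm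
    rw [Finset.prod_empty, coeff_one]
    have : m ≠ 0 := by rintro rfl; simp [Nat.odd_iff] at hm
    simp [this]
  | @insert a s' hx ih =>
    rw [Finset.prod_insert hx]
    exact even_mul_aux _ _ (hF a (Finset.mem_insert_self a s'))
      (ih fun k hk => hF k (Finset.mem_insert_of_mem hk))

lemma four_eq_zero : (4 : PowerSeries (ZMod 4)) = 0 := by
  rw [← map_ofNat (C (R := ZMod 4)) 4, show (4 : ZMod 4) = 0 from rfl, map_zero]

lemma pow_four_congr (m : ℕ) :
    ((1 - X ^ m : PowerSeries (ZMod 4)))^4 = (1 + X ^ (2 * m))^2 := by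
  have hx : (X ^ (2 * m) : PowerSeries (ZMod 4)) = (X ^ m) ^ 2 := by
    rw [← pow_mul, mul_comm]
  have key : ((1 - X ^ m : PowerSeries (ZMod 4)))^4 =
      (1 + (X ^ m)^2)^2 + 4 * ((X^m)^2 - X^m - (X^m)^3) := by ring
  rw [hx, key, four_eq_zero]; ring

/-- with `D4` defined by
`∑ D4(n) qⁿ = ∏(1−q^k)⁴ / (∏(1−q^{2k})·∏(1−q^{4k}))` (coefficientwise, denominator
cleared, infinite products truncated harmlessly), we have `4 ∣ D4(2n+1)` for all `n ≥ 0`. -/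
theorem bicrank_mod_four_congruence
    (D4 : ℕ → ℤ)
    (hD4 : ∀ n : ℕ,
      PowerSeries.coeff (R := ℤ) n
          (PowerSeries.mk D4 *
            (∏ k ∈ Finset.range (n + 1), (1 - PowerSeries.X ^ (2 * (k + 1)))) *
            (∏ k ∈ Finset.range (n + 1), (1 - PowerSeries.X ^ (4 * (k + 1))))) =
        PowerSeries.coeff (R := ℤ) n
          (∏ k ∈ Finset.range (n + 1), (1 - PowerSeries.X ^ (k + 1)) ^ 4)) :
    ∀ n : ℕ, (4 : ℤ) ∣ D4 (2 * n + 1) := by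
  set φ : ℤ →+* ZMod 4 := Int.castRingHom (ZMod 4)
  set g : PowerSeries (ZMod 4) := PowerSeries.map φ (PowerSeries.mk D4) with hg
  have hgcoeff : ∀ m, coeff (R := ZMod 4) m g = ((D4 m : ZMod 4)) := by
    intro m; simp [hg, PowerSeries.coeff_map, φ]
  have key : ∀ N, Odd N → ((D4 N : ZMod 4)) = 0 := by
    intro N
    induction N using Nat.strong_induction_on with
    | _ N ih =>
      intro hN
      have hmapL : PowerSeries.map φ
          (PowerSeries.mk D4 *
            (∏ k ∈ Finset.range (N + 1), (1 - (X : PowerSeries ℤ) ^ (2 * (k + 1)))) *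
            (∏ k ∈ Finset.range (N + 1), (1 - (X : PowerSeries ℤ) ^ (4 * (k + 1))))) =
          g * (∏ k ∈ Finset.range (N + 1), ((1 : PowerSeries (ZMod 4)) - X ^ (2 * (k + 1)))) *
            (∏ k ∈ Finset.range (N + 1), ((1 : PowerSeries (ZMod 4)) - X ^ (4 * (k + 1)))) := by
        rw [map_mul, map_mul, map_prod, map_prod]
        simp only [map_sub, map_pow, map_one, PowerSeries.map_X]
        rfl
      have hmapR : PowerSeries.map φ
          (∏ k ∈ Finset.range (N + 1), (1 - (X : PowerSeries ℤ) ^ (k + 1)) ^ 4) =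
          ∏ k ∈ Finset.range (N + 1), ((1 : PowerSeries (ZMod 4)) - X ^ (k + 1)) ^ 4 := by
        rw [map_prod]
        simp only [map_sub, map_pow, map_one, PowerSeries.map_X]
      have h2 := congrArg φ (hD4 N)
      rw [← PowerSeries.coeff_map, ← PowerSeries.coeff_map, hmapL, hmapR] at h2
      -- RHS is even
      have hRHS : coeff (R := ZMod 4) N
          (∏ k ∈ Finset.range (N + 1), ((1 : PowerSeries (ZMod 4)) - X ^ (k + 1)) ^ 4) = 0 := by
        apply even_prod
        · intro k _ m hm
          rw [pow_four_congr, sq]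
          exact even_mul_aux _ _ (even_one_add (k+1)) (even_one_add (k+1)) m hm
        · exact hN
      -- E := product of denominators, is even with constant coeff 1
      set A : PowerSeries (ZMod 4) :=
        ∏ k ∈ Finset.range (N + 1), ((1 : PowerSeries (ZMod 4)) - X ^ (2 * (k + 1)))
      set B : PowerSeries (ZMod 4) :=
        ∏ k ∈ Finset.range (N + 1), ((1 : PowerSeries (ZMod 4)) - X ^ (4 * (k + 1)))
      have hA : ∀ m, Odd m → coeff (R := ZMod 4) m A = 0 :=
        even_prod _ _ (fun k _ => even_one_sub (k+1))
      have hB : ∀ m, Odd m → coeff (R := ZMod 4) m B = 0 := by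
        apply even_prod
        intro k _
        have : 4 * (k + 1) = 2 * (2 * (k + 1)) := by ring
        rw [this]
        exact even_one_sub (2 * (k+1))
      have hE : ∀ m, Odd m → coeff (R := ZMod 4) m (A * B) = 0 := even_mul_aux _ _ hA hB
      have hE0 : coeff (R := ZMod 4) 0 (A * B) = 1 := by
        rw [PowerSeries.coeff_zero_eq_constantCoeff, map_mul, map_prod, map_prod]
        simp
      -- LHS equals coeff N g
      have hsum : coeff (R := ZMod 4) N (g * A * B) = coeff (R := ZMod 4) N g := by
        rw [mul_assoc, coeff_mul]
        rw [Finset.sum_eq_single_of_mem (N, 0)]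
        · rw [hE0, mul_one]
        · rw [Finset.HasAntidiagonal.mem_antidiagonal]; simp
        · intro p hp hne
          rw [Finset.HasAntidiagonal.mem_antidiagonal] at hp
          have hp2 : p.2 ≠ 0 := by
            rintro h0
            apply hne
            have : p.1 = N := by omega
            exact Prod.ext this h0
          rcases Nat.even_or_odd p.1 with h1 | h1
          · have : Odd p.2 := by
              rcases h1 with ⟨a, ha⟩; rcases hN with ⟨b, hb⟩
              rcases Nat.even_or_odd p.2 with ⟨c, hc⟩ | hodd; · omega
              exact hodd
            rw [hE _ this, mul_zero]
          · have hlt : p.1 < N := by omega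
            rw [hgcoeff, ih p.1 hlt h1, zero_mul]
      rw [hsum, hRHS] at h2
      rw [hgcoeff] at h2
      exact h2
  intro n
  have := key (2 * n + 1) ⟨n, by omega⟩
  exact (ZMod.intCast_zmod_eq_zero_iff_dvd (D4 (2*n+1)) 4).mp this
end
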